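/- arXiv:2501.06630 — 5 statements merged into one kernel-verified Lean document; each statement's English description precedes it below -/
import Mathlib

section
/- Let μ be a discrete growth rate with μ_{n+1}/μ_n ≤ θ for all n ≥ 0 and some θ ≥ 1, let 𝔸 = {A_n}_{n≥1} be invertible bounded operators on a Banach space X, and set η_n = e^n. Suppose there exist K, a > 0 with ‖Φ_A(m,k)‖ ≤ K(μ_m/μ_k)^a for m ≥ k and ‖Φ_A(m,k)‖ ≤ K(μ_k/μ_m)^a for m ≤ k. Then Σ_{μD,𝔸} = Σ_{ED,ℚ}, i.e., for every λ ∈ ℝ the system x_{n+1} = (μ_{n+1}/μ_n)^{−λ} A_n x_n admits a μ-dichotomy if and only if the system y_{n+1} = e^{−λ} Q_n^{μ,η} y_n admits an exponential dichotomy. -/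
noncomputable section

open Filter Metric Set Topology

variable {X : Type*} [NormedAddCommGroup X] [NormedSpace ℝ X]

/-- A discrete growth rate: strictly increasing, `μ 0 = 1`, `μ n → ∞`. -/
def IsGrowthRate (μ : ℕ → ℝ) : Prop :=
  StrictMono μ ∧ μ 0 = 1 ∧ Filter.Tendsto μ Filter.atTop Filter.atTop

/-- The piecewise linear extension `μ̃` of a growth rate. -/
def tildeExt (μ : ℕ → ℝ) (t : ℝ) : ℝ :=
  μ ⌊t⌋₊ + (t - (⌊t⌋₊ : ℝ)) * (μ (⌊t⌋₊ + 1) - μ ⌊t⌋₊)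

/-- `⌊μ̃⁻¹ t⌋`, i.e. the largest `n` with `μ n ≤ t` (for `t ≥ 1`). -/
def floorInvTilde (μ : ℕ → ℝ) (t : ℝ) : ℕ := sSup {n : ℕ | μ n ≤ t}

/-- `⌊μ̃⁻¹ (η (k-1))⌋ + 1`. -/
def idxQ (μ η : ℕ → ℝ) (k : ℕ) : ℕ := floorInvTilde μ (η (k - 1)) + 1

def evolFwd (A : ℕ → X →L[ℝ] X) (k : ℕ) : ℕ → X →L[ℝ] X
  | 0 => ContinuousLinearMap.id ℝ X
  | n + 1 => (A (k + n)).comp (evolFwd A k n)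

/-- The evolution family `Φ_A(m,k) = A_{m-1} ∘ ⋯ ∘ A_k` for `m ≥ k`. -/
def evol (A : ℕ → X →L[ℝ] X) (m k : ℕ) : X →L[ℝ] X := evolFwd A k (m - k)

def evolFwdE (A : ℕ → X ≃L[ℝ] X) (k : ℕ) : ℕ → X ≃L[ℝ] X
  | 0 => ContinuousLinearEquiv.refl ℝ X
  | n + 1 => (evolFwdE A k n).trans (A (k + n))

/-- Two-sided evolution family of a sequence of invertible operators:
`Φ_A(m,k) = A_{m-1}⋯A_k` for `m > k`, `Id` for `m = k`, `A_m⁻¹⋯A_{k-1}⁻¹` for `m < k`. -/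
def evolEquiv (A : ℕ → X ≃L[ℝ] X) (m k : ℕ) : X ≃L[ℝ] X :=
  if k ≤ m then evolFwdE A k (m - k) else (evolFwdE A m (k - m)).symm

def evolE (A : ℕ → X ≃L[ℝ] X) (m k : ℕ) : X →L[ℝ] X := (evolEquiv A m k : X →L[ℝ] X)

/-- The time-rescaled sequence `Q_n^{μ,η} = Φ_A(⌊μ̃⁻¹(η n)⌋+1, ⌊μ̃⁻¹(η (n-1))⌋+1)`. -/
def Qseq (A : ℕ → X →L[ℝ] X) (μ η : ℕ → ℝ) (n : ℕ) : X →L[ℝ] X :=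
  evol A (idxQ μ η (n + 1)) (idxQ μ η n)

def QseqE (A : ℕ → X ≃L[ℝ] X) (μ η : ℕ → ℝ) (n : ℕ) : X ≃L[ℝ] X :=
  evolEquiv A (idxQ μ η (n + 1)) (idxQ μ η n)

/-- A sequence of norms on `X`. -/
def IsNormFamily (Nrm : ℕ → X → ℝ) : Prop :=
  ∀ k, (∀ x y : X, Nrm k (x + y) ≤ Nrm k x + Nrm k y) ∧
    (∀ (c : ℝ) (x : X), Nrm k (c • x) = |c| * Nrm k x) ∧
    (∀ x : X, Nrm k x = 0 → x = 0)

/-- Each norm in the family is equivalent to the ambient norm. -/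
def NormsEquivalent (Nrm : ℕ → X → ℝ) : Prop :=
  ∀ k, ∃ α β : ℝ, 0 < α ∧ 0 < β ∧ ∀ x : X, α * ‖x‖ ≤ Nrm k x ∧ Nrm k x ≤ β * ‖x‖

/-- (od1)–(od2): a sequence of projections compatible with the dynamics, such that the
restriction of `A k` to `Ker P k` is an isomorphism onto `Ker P (k+1)`. -/
def ProjectionsCompat (A P : ℕ → X →L[ℝ] X) : Prop :=
  (∀ k, 1 ≤ k → (P k).comp (P k) = P k) ∧
  (∀ k, 1 ≤ k → (A k).comp (P k) = (P (k + 1)).comp (A k)) ∧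
  (∀ k, 1 ≤ k → Set.BijOn (⇑(A k)) {x : X | P k x = 0} {x : X | P (k + 1) x = 0})

/-- μ-dichotomy with respect to a sequence of norms, relative to given projections.
For `m ≤ k`, `Φ_A(m,k)(Id - P_k)x` denotes the unique `z ∈ Ker P_m` with
`Φ_A(k,m) z = (Id - P_k) x`. -/
def MuDichotomyNormsWith (μ : ℕ → ℝ) (A P : ℕ → X →L[ℝ] X) (Nrm : ℕ → X → ℝ) : Prop :=
  ProjectionsCompat A P ∧
  ∃ N ν : ℝ, 1 ≤ N ∧ 0 < ν ∧
    (∀ k m : ℕ, 1 ≤ k → k ≤ m → ∀ x : X,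
      Nrm m (evol A m k (P k x)) ≤ N * (μ m / μ k) ^ (-ν) * Nrm k x) ∧
    (∀ m k : ℕ, 1 ≤ m → m ≤ k → ∀ x z : X, P m z = 0 → evol A k m z = x - P k x →
      Nrm m z ≤ N * (μ k / μ m) ^ (-ν) * Nrm k x)

/-- Ordinary dichotomy with respect to a sequence of norms, relative to given projections. -/
def OrdinaryDichotomyNormsWith (A P : ℕ → X →L[ℝ] X) (Nrm : ℕ → X → ℝ) : Prop :=
  ProjectionsCompat A P ∧
  ∃ K : ℝ, 1 ≤ K ∧
    (∀ k m : ℕ, 1 ≤ k → k ≤ m → ∀ x : X, Nrm m (evol A m k (P k x)) ≤ K * Nrm k x) ∧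
    (∀ m k : ℕ, 1 ≤ m → m ≤ k → ∀ x z : X, P m z = 0 → evol A k m z = x - P k x →
      Nrm m z ≤ K * Nrm k x)

/-- μ-dichotomy (with respect to a sequence of norms) of a system of invertible operators. -/
def MuDichotomyNormsE (μ : ℕ → ℝ) (A : ℕ → X ≃L[ℝ] X) (Nrm : ℕ → X → ℝ) : Prop :=
  ∃ P : ℕ → X →L[ℝ] X,
    (∀ k, 1 ≤ k → (P k).comp (P k) = P k) ∧
    (∀ k, 1 ≤ k → ((A k : X →L[ℝ] X)).comp (P k) = (P (k + 1)).comp ((A k : X →L[ℝ] X))) ∧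
    (∀ k, 1 ≤ k → Set.BijOn (⇑(A k)) {x : X | P k x = 0} {x : X | P (k + 1) x = 0}) ∧
    ∃ N ν : ℝ, 1 ≤ N ∧ 0 < ν ∧
      (∀ k m : ℕ, 1 ≤ k → k ≤ m → ∀ x : X,
        Nrm m (evolE A m k (P k x)) ≤ N * (μ m / μ k) ^ (-ν) * Nrm k x) ∧
      (∀ m k : ℕ, 1 ≤ m → m ≤ k → ∀ x : X,
        Nrm m (evolE A m k (x - P k x)) ≤ N * (μ k / μ m) ^ (-ν) * Nrm k x)

/-- μ-dichotomy with respect to the original norm. -/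
def MuDichotomy (μ : ℕ → ℝ) (B : ℕ → X →L[ℝ] X) : Prop :=
  ∃ P : ℕ → X →L[ℝ] X, MuDichotomyNormsWith μ B P fun _ x => ‖x‖

/-- The scaled system `Ã_n = (μ_{n+1}/μ_n)^{-λ} A_n`. -/
def scaledSys (μ : ℕ → ℝ) (A : ℕ → X ≃L[ℝ] X) (l : ℝ) (n : ℕ) : X →L[ℝ] X :=
  ((μ (n + 1) / μ n) ^ (-l)) • (A n : X →L[ℝ] X)

/-- The generalized dichotomy spectrum `Σ_{μD,𝔸}`. -/
def muSpectrum (μ : ℕ → ℝ) (A : ℕ → X ≃L[ℝ] X) : Set ℝ :=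
  {l : ℝ | ¬ MuDichotomy μ (scaledSys μ A l)}

/-- The exponential growth rate `n ↦ e^n`. -/
def expRate : ℕ → ℝ := fun n => Real.exp n

/-- `Σ_{ED,ℚ}`: the Sacker–Sell spectrum of the time-rescaled system. -/
def expSpectrumQ (μ : ℕ → ℝ) (A : ℕ → X ≃L[ℝ] X) : Set ℝ :=
  {l : ℝ | ¬ MuDichotomy expRate fun n => Real.exp (-l) • (QseqE A μ expRate n : X →L[ℝ] X)}

/-- `f` is a homeomorphism. -/
def IsHomeoOf {Y : Type*} [TopologicalSpace Y] (f : Y → Y) : Prop :=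
  ∃ h : Y ≃ₜ Y, ∀ x, h x = f x

/-- The perturbed maps `x ↦ A_n x + g_n x`. -/
def pert (A : ℕ → X ≃L[ℝ] X) (g : ℕ → X → X) (n : ℕ) : X → X := fun x => A n x + g n x

def nlFwd (F : ℕ → X → X) (n : ℕ) : ℕ → X → X
  | 0 => id
  | j + 1 => F (n + j) ∘ nlFwd F n j

/-- Nonlinear evolution `𝒢(m,n) = (A_{m-1}+g_{m-1})∘⋯∘(A_n+g_n)` for `m ≥ n`. -/
def nlEvol (A : ℕ → X ≃L[ℝ] X) (g : ℕ → X → X) (m n : ℕ) : X → X := nlFwd (pert A g) n (m - n)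

def nlBwd (F : ℕ → X → X) (m : ℕ) : ℕ → X → X
  | 0 => id
  | j + 1 => nlBwd F m j ∘ Function.invFun (F (m + j))

/-- Nonlinear evolution `𝒢(m,n) = (A_m+g_m)⁻¹∘⋯∘(A_{n-1}+g_{n-1})⁻¹` for `m ≤ n`. -/
def nlEvolBwd (A : ℕ → X ≃L[ℝ] X) (g : ℕ → X → X) (m n : ℕ) : X → X :=
  nlBwd (pert A g) m (n - m)

/-- The rescaled nonlinearities `f_n`. -/
def fSeq (A : ℕ → X ≃L[ℝ] X) (g : ℕ → X → X) (μ : ℕ → ℝ) (n : ℕ) (x : X) : X :=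
  ∑ j ∈ Finset.Icc (floorInvTilde μ (expRate (n - 1)) + 1) (floorInvTilde μ (expRate n)),
    evolE A (floorInvTilde μ (expRate n) + 1) (j + 1)
      (g j (nlEvol A g j (floorInvTilde μ (expRate (n - 1)) + 1) x))

/-- The class `𝒪_μ^k`, with constant `M`. -/
def InOmegaMu (μ : ℕ → ℝ) (k : ℕ) (f : ℕ → X → X) (M : ℝ) : Prop :=
  (∀ n, ContDiff ℝ (k : ℕ∞) (f n)) ∧ (∀ n, f n 0 = 0) ∧ (∀ n, fderiv ℝ (f n) 0 = 0) ∧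
  ∀ n, 1 ≤ n → ∀ x : X, ∀ j : ℕ, j ≤ k →
    ‖iteratedFDeriv ℝ j (f n) x‖ ≤ M * (μ (n + 1) - μ n) / μ n

namespace SpecAux

variable {X : Type*} [NormedAddCommGroup X] [NormedSpace ℝ X]

/-! ### growth rate basics -/

theorem mu_mono {μ : ℕ → ℝ} (hμ : IsGrowthRate μ) {k m : ℕ} (h : k ≤ m) : μ k ≤ μ m :=
  hμ.1.monotone h

theorem mu_one_le {μ : ℕ → ℝ} (hμ : IsGrowthRate μ) (n : ℕ) : 1 ≤ μ n :=
  hμ.2.1 ▸ hμ.1.monotone (Nat.zero_le n)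

theorem mu_pos {μ : ℕ → ℝ} (hμ : IsGrowthRate μ) (n : ℕ) : 0 < μ n :=
  lt_of_lt_of_le one_pos (mu_one_le hμ n)

/-! ### evolution family algebra -/

theorem evolEquiv_self (A : ℕ → X ≃L[ℝ] X) (k : ℕ) :
    evolEquiv A k k = ContinuousLinearEquiv.refl ℝ X := by
  simp [evolEquiv, evolFwdE]

theorem evolE_self (A : ℕ → X ≃L[ℝ] X) (k : ℕ) (x : X) : evolE A k k x = x := by
  simp [evolE, evolEquiv_self]

theorem evolEquiv_of_le (A : ℕ → X ≃L[ℝ] X) {k m : ℕ} (h : k ≤ m) :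
    evolEquiv A m k = evolFwdE A k (m - k) := if_pos h

theorem evolEquiv_succ (A : ℕ → X ≃L[ℝ] X) {k m : ℕ} (h : k ≤ m) :
    evolEquiv A (m + 1) k = (evolEquiv A m k).trans (A m) := by
  rw [evolEquiv_of_le A h, evolEquiv_of_le A (h.trans (Nat.le_succ m)), Nat.succ_sub h]
  show (evolFwdE A k (m - k)).trans (A (k + (m - k))) = _
  rw [Nat.add_sub_cancel' h]

theorem evolE_succ (A : ℕ → X ≃L[ℝ] X) {k m : ℕ} (h : k ≤ m) (x : X) :
    evolE A (m + 1) k x = A m (evolE A m k x) := by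
  rw [evolE, evolE, evolEquiv_succ A h]; rfl

theorem evolE_step (A : ℕ → X ≃L[ℝ] X) (m : ℕ) (x : X) :
    evolE A (m + 1) m x = A m x := by
  rw [evolE_succ A le_rfl, evolE_self]

theorem evolE_comp (A : ℕ → X ≃L[ℝ] X) {k j m : ℕ} (hkj : k ≤ j) (hjm : j ≤ m) (x : X) :
    evolE A m j (evolE A j k x) = evolE A m k x := by
  induction m, hjm using Nat.le_induction with
  | base => rw [evolE_self]
  | succ m hjm ih =>
    rw [evolE_succ A hjm, evolE_succ A (hkj.trans hjm), ih]

theorem evolEquiv_symm (A : ℕ → X ≃L[ℝ] X) (m k : ℕ) :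
    (evolEquiv A m k).symm = evolEquiv A k m := by
  rcases le_or_gt k m with h | h
  · rcases eq_or_lt_of_le h with rfl | h'
    · simp [evolEquiv_self]
    · rw [evolEquiv_of_le A h, evolEquiv]
      rw [if_neg (by omega)]
  · rw [evolEquiv, if_neg (by omega), evolEquiv_of_le A h.le,
      ContinuousLinearEquiv.symm_symm]

theorem evolE_cancel (A : ℕ → X ≃L[ℝ] X) (m k : ℕ) (x : X) :
    evolE A k m (evolE A m k x) = x := by
  rw [evolE, evolE, ← evolEquiv_symm A m k]
  exact (evolEquiv A m k).symm_apply_apply x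

/-- injectivity of the evolution operators -/
theorem evolE_inj (A : ℕ → X ≃L[ℝ] X) (m k : ℕ) {x y : X}
    (h : evolE A m k x = evolE A m k y) : x = y := by
  have := congrArg (evolE A k m) h
  rwa [evolE_cancel, evolE_cancel] at this

end SpecAux
namespace SpecAux

variable {X : Type*} [NormedAddCommGroup X] [NormedSpace ℝ X]

/-! ### evolution of scaled systems -/

theorem evol_smul (A : ℕ → X ≃L[ℝ] X) (c : ℕ → ℝ) {k m : ℕ} (h : k ≤ m) (x : X) :
    evol (fun n => c n • (A n : X →L[ℝ] X)) m k x
      = (∏ j ∈ Finset.Ico k m, c j) • evolE A m k x := by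
  induction m, h using Nat.le_induction with
  | base =>
    show evolFwd _ k (k - k) x = _
    rw [Nat.sub_self]
    simp [evolFwd, evolE_self]
  | succ m hkm ih =>
    have h1 : evol (fun n => c n • (A n : X →L[ℝ] X)) (m + 1) k x
        = c m • (A m (evol (fun n => c n • (A n : X →L[ℝ] X)) m k x)) := by
      show evolFwd _ k (m + 1 - k) x = _
      rw [Nat.succ_sub hkm]
      show (c (k + (m - k)) • (A (k + (m - k)) : X →L[ℝ] X))
        (evolFwd _ k (m - k) x) = _
      rw [Nat.add_sub_cancel' hkm]; rfl
    rw [h1, ih, Finset.prod_Ico_succ_top hkm, evolE_succ A hkm, map_smul]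
    rw [smul_smul, mul_comm]

theorem prod_ratio_rpow {μ : ℕ → ℝ} (hμ : IsGrowthRate μ) (l : ℝ) {k m : ℕ} (h : k ≤ m) :
    (∏ j ∈ Finset.Ico k m, (μ (j + 1) / μ j) ^ (-l)) = (μ m / μ k) ^ (-l) := by
  induction m, h using Nat.le_induction with
  | base => rw [Finset.Ico_self, Finset.prod_empty, div_self (mu_pos hμ k).ne',
      Real.one_rpow]
  | succ m hkm ih =>
    rw [Finset.prod_Ico_succ_top hkm, ih,
      ← Real.mul_rpow (div_nonneg (mu_pos hμ _).le (mu_pos hμ _).le)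
        (div_nonneg (mu_pos hμ _).le (mu_pos hμ _).le)]
    congr 1
    rw [div_mul_div_comm, mul_comm (μ k) (μ m),
      mul_div_mul_left _ _ (mu_pos hμ m).ne']

theorem evol_scaledSys {μ : ℕ → ℝ} (hμ : IsGrowthRate μ) (A : ℕ → X ≃L[ℝ] X) (l : ℝ)
    {k m : ℕ} (h : k ≤ m) (x : X) :
    evol (scaledSys μ A l) m k x = ((μ m / μ k) ^ (-l)) • evolE A m k x := by
  rw [show scaledSys μ A l = fun n => ((μ (n+1) / μ n) ^ (-l)) • (A n : X →L[ℝ] X) from rfl,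
    evol_smul A _ h, prod_ratio_rpow hμ l h]

/-! ### real power helper lemmas -/

theorem exp_rpow (t s : ℝ) : (Real.exp t) ^ s = Real.exp (t * s) := by
  rw [Real.rpow_def_of_pos (Real.exp_pos t), Real.log_exp]

/-- the key comparison tool: if `u` and `v` agree up to a factor `C`, then
`v ^ s ≤ C ^ |s| * u ^ s`. -/
theorem rpow_ratio_bound {u v C : ℝ} (hu : 0 < u) (hC : 1 ≤ C)
    (h1 : v ≤ C * u) (h2 : u ≤ C * v) (s : ℝ) : v ^ s ≤ C ^ |s| * u ^ s := by
  have hC0 : 0 < C := lt_of_lt_of_le one_pos hC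
  have hv : 0 < v := by nlinarith
  rcases le_or_gt 0 s with hs | hs
  · rw [abs_of_nonneg hs, ← Real.mul_rpow hC0.le hu.le]
    exact Real.rpow_le_rpow hv.le h1 hs
  · rw [abs_of_neg hs]
    have h3 : u / C ≤ v := (div_le_iff₀' hC0).mpr h2
    have h4 : (u / C) ^ s ≥ v ^ s := Real.rpow_le_rpow_of_nonpos (by positivity) h3 hs.le
    calc v ^ s ≤ (u / C) ^ s := h4
      _ = C ^ (-s) * u ^ s := by
          rw [Real.div_rpow hu.le hC0.le, div_eq_mul_inv, ← Real.rpow_neg hC0.le, mul_comm]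

theorem rpow_mul_rpow_neg {u : ℝ} (hu : 0 < u) (s : ℝ) : u ^ s * u ^ (-s) = 1 := by
  rw [← Real.rpow_add hu, add_neg_cancel, Real.rpow_zero]

end SpecAux
namespace SpecAux

variable {X : Type*} [NormedAddCommGroup X] [NormedSpace ℝ X]

/-! ### floorInvTilde and idxQ -/

theorem floorInv_bddAbove {μ : ℕ → ℝ} (hμ : IsGrowthRate μ) (t : ℝ) :
    BddAbove {n : ℕ | μ n ≤ t} := by
  obtain ⟨N, hN⟩ := Filter.eventually_atTop.mp (hμ.2.2.eventually_ge_atTop (t + 1))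
  refine ⟨N, fun n hn => ?_⟩
  by_contra hc
  push_neg at hc
  have h2 := hN n hc.le
  have h3 : μ n ≤ t := hn
  linarith

theorem floorInv_spec {μ : ℕ → ℝ} (hμ : IsGrowthRate μ) {t : ℝ} (ht : 1 ≤ t) :
    μ (floorInvTilde μ t) ≤ t ∧ t < μ (floorInvTilde μ t + 1) := by
  have hne : (0 : ℕ) ∈ {n : ℕ | μ n ≤ t} := by simp [hμ.2.1, ht]
  have hmem := Nat.sSup_mem ⟨0, hne⟩ (floorInv_bddAbove hμ t)
  refine ⟨hmem, ?_⟩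
  by_contra hc
  have : floorInvTilde μ t + 1 ∈ {n : ℕ | μ n ≤ t} := le_of_not_gt hc
  have h2 : floorInvTilde μ t + 1 ≤ floorInvTilde μ t :=
    le_csSup (floorInv_bddAbove hμ t) this
  omega

theorem floorInv_mono {μ : ℕ → ℝ} (hμ : IsGrowthRate μ) {t t' : ℝ} (ht : 1 ≤ t)
    (h : t ≤ t') : floorInvTilde μ t ≤ floorInvTilde μ t' :=
  le_csSup (floorInv_bddAbove hμ t') (le_trans (floorInv_spec hμ ht).1 h)

theorem expRate_pos (n : ℕ) : 0 < expRate n := Real.exp_pos _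

theorem one_le_expRate (n : ℕ) : 1 ≤ expRate n := Real.one_le_exp (by positivity)

theorem idxQ_pos (μ : ℕ → ℝ) (k : ℕ) : 1 ≤ idxQ μ expRate k := Nat.le_add_left 1 _

theorem idxQ_mono {μ : ℕ → ℝ} (hμ : IsGrowthRate μ) {k m : ℕ} (h : k ≤ m) :
    idxQ μ expRate k ≤ idxQ μ expRate m := by
  have : expRate (k - 1) ≤ expRate (m - 1) :=
    Real.exp_le_exp.mpr (by exact_mod_cast Nat.sub_le_sub_right h 1)
  exact Nat.succ_le_succ (floorInv_mono hμ (one_le_expRate _) this)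

theorem idxQ_lb {μ : ℕ → ℝ} (hμ : IsGrowthRate μ) (k : ℕ) :
    expRate (k - 1) < μ (idxQ μ expRate k) :=
  (floorInv_spec hμ (one_le_expRate _)).2

theorem idxQ_ub {μ : ℕ → ℝ} (hμ : IsGrowthRate μ) {θ : ℝ} (hθ : 1 ≤ θ)
    (hμr : ∀ n, μ (n + 1) / μ n ≤ θ) (k : ℕ) :
    μ (idxQ μ expRate k) ≤ θ * expRate (k - 1) := by
  have h1 : μ (floorInvTilde μ (expRate (k - 1)) + 1)
      ≤ θ * μ (floorInvTilde μ (expRate (k - 1))) :=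
    (div_le_iff₀ (mu_pos hμ _)).mp (hμr _)
  refine h1.trans ?_
  have := (floorInv_spec hμ (one_le_expRate (k - 1))).1
  nlinarith [mu_pos hμ (floorInvTilde μ (expRate (k - 1)))]

theorem idxQ_one {μ : ℕ → ℝ} (hμ : IsGrowthRate μ) : idxQ μ expRate 1 = 1 := by
  have h1 : expRate (1 - 1) = 1 := by simp [expRate]
  have hset : {n : ℕ | μ n ≤ expRate (1 - 1)} = {0} := by
    ext n
    simp only [Set.mem_setOf_eq, Set.mem_singleton_iff, h1]
    rw [← hμ.2.1, hμ.1.le_iff_le]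
    omega
  unfold idxQ floorInvTilde
  rw [hset, csSup_singleton]

end SpecAux
namespace SpecAux

/-- expRate ratio: `e^m / e^k = e^{m-1}/e^{k-1}` for `1 ≤ k`, `1 ≤ m`. -/
theorem expRate_ratio_shift {k m : ℕ} (hk : 1 ≤ k) (hm : 1 ≤ m) :
    expRate (m - 1) / expRate (k - 1) = expRate m / expRate k := by
  unfold expRate
  rw [← Real.exp_sub, ← Real.exp_sub]
  congr 1
  rw [Nat.cast_sub hm, Nat.cast_sub hk]
  ring

theorem expRate_div_pos (k m : ℕ) : 0 < expRate m / expRate k :=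
  div_pos (expRate_pos m) (expRate_pos k)

/-- comparison of `μ (idx m) / μ (idx k)` with `e^m / e^k` (for `1 ≤ k ≤ m`). -/
theorem mu_idx_ratio {μ : ℕ → ℝ} (hμ : IsGrowthRate μ) {θ : ℝ} (hθ : 1 ≤ θ)
    (hμr : ∀ n, μ (n + 1) / μ n ≤ θ) {k m : ℕ} (hk : 1 ≤ k) (hm : 1 ≤ m) :
    μ (idxQ μ expRate m) / μ (idxQ μ expRate k) ≤ θ * (expRate m / expRate k) ∧
    expRate m / expRate k ≤ θ * (μ (idxQ μ expRate m) / μ (idxQ μ expRate k)) := by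
  rw [← expRate_ratio_shift hk hm]
  set Em := expRate (m - 1) with hEm
  set Ek := expRate (k - 1) with hEk
  have hEm0 : 0 < Em := expRate_pos _
  have hEk0 : 0 < Ek := expRate_pos _
  have h1 : Ek < μ (idxQ μ expRate k) := idxQ_lb hμ k
  have h2 : μ (idxQ μ expRate k) ≤ θ * Ek := idxQ_ub hμ hθ hμr k
  have h3 : Em < μ (idxQ μ expRate m) := idxQ_lb hμ m
  have h4 : μ (idxQ μ expRate m) ≤ θ * Em := idxQ_ub hμ hθ hμr m
  have hik : 0 < μ (idxQ μ expRate k) := mu_pos hμ _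
  have him : 0 < μ (idxQ μ expRate m) := mu_pos hμ _
  constructor
  · rw [show θ * (Em / Ek) = (θ * Em) / Ek by ring, div_le_div_iff₀ hik hEk0]
    nlinarith
  · rw [show θ * (μ (idxQ μ expRate m) / μ (idxQ μ expRate k))
        = (θ * μ (idxQ μ expRate m)) / μ (idxQ μ expRate k) by ring,
      div_le_div_iff₀ hEk0 hik]
    nlinarith

/-! ### the inverse block index -/

/-- the largest `n` with `idxQ μ expRate n ≤ j` (for `j ≥ 1`). -/
def nIdx (μ : ℕ → ℝ) (j : ℕ) : ℕ := sSup {n : ℕ | idxQ μ expRate n ≤ j}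

theorem idxQ_unbounded {μ : ℕ → ℝ} (hμ : IsGrowthRate μ) (j : ℕ) :
    ∃ n, j < idxQ μ expRate n := by
  refine ⟨⌈μ j⌉₊ + 1, ?_⟩
  have h1 : μ j ≤ expRate (⌈μ j⌉₊ + 1 - 1) := by
    show μ j ≤ Real.exp _
    calc μ j ≤ (⌈μ j⌉₊ : ℝ) := Nat.le_ceil _
      _ ≤ Real.exp (⌈μ j⌉₊ : ℝ) := by
          have := Real.add_one_le_exp ((⌈μ j⌉₊ : ℝ))
          linarith
      _ = Real.exp ((⌈μ j⌉₊ + 1 - 1 : ℕ) : ℝ) := by norm_num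
  have h2 : μ j < μ (idxQ μ expRate (⌈μ j⌉₊ + 1)) :=
    lt_of_le_of_lt h1 (idxQ_lb hμ _)
  exact hμ.1.lt_iff_lt.mp h2

theorem nIdx_bddAbove {μ : ℕ → ℝ} (hμ : IsGrowthRate μ) (j : ℕ) :
    BddAbove {n : ℕ | idxQ μ expRate n ≤ j} := by
  obtain ⟨N, hN⟩ := idxQ_unbounded hμ j
  refine ⟨N, fun n hn => ?_⟩
  by_contra hc
  push_neg at hc
  have : idxQ μ expRate N ≤ idxQ μ expRate n := idxQ_mono hμ hc.le
  have hn' : idxQ μ expRate n ≤ j := hn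
  omega

theorem nIdx_pos {μ : ℕ → ℝ} (hμ : IsGrowthRate μ) {j : ℕ} (hj : 1 ≤ j) :
    1 ≤ nIdx μ j :=
  le_csSup (nIdx_bddAbove hμ j) (by simpa [idxQ_one hμ] using hj)

theorem nIdx_le {μ : ℕ → ℝ} (hμ : IsGrowthRate μ) {j : ℕ} (hj : 1 ≤ j) :
    idxQ μ expRate (nIdx μ j) ≤ j :=
  Nat.sSup_mem ⟨1, by simpa [idxQ_one hμ] using hj⟩ (nIdx_bddAbove hμ j)

theorem nIdx_lt {μ : ℕ → ℝ} (hμ : IsGrowthRate μ) {j : ℕ} (hj : 1 ≤ j) :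
    j < idxQ μ expRate (nIdx μ j + 1) := by
  by_contra hc
  push_neg at hc
  have h2 : nIdx μ j + 1 ≤ nIdx μ j := le_csSup (nIdx_bddAbove hμ j) hc
  omega

theorem nIdx_mono {μ : ℕ → ℝ} (hμ : IsGrowthRate μ) {j j' : ℕ} (hj : 1 ≤ j)
    (h : j ≤ j') : nIdx μ j ≤ nIdx μ j' :=
  le_csSup (nIdx_bddAbove hμ j') (le_trans (nIdx_le hμ hj) h)

/-- within a block, `μ j` exceeds `μ (idx (nIdx j))` by at most `θe`. -/
theorem mu_block_ub {μ : ℕ → ℝ} (hμ : IsGrowthRate μ) {θ : ℝ} (hθ : 1 ≤ θ)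
    (hμr : ∀ n, μ (n + 1) / μ n ≤ θ) {j : ℕ} (hj : 1 ≤ j) :
    μ j ≤ (θ * Real.exp 1) * μ (idxQ μ expRate (nIdx μ j)) := by
  have hn := nIdx_pos hμ hj
  have h1 : μ j ≤ μ (idxQ μ expRate (nIdx μ j + 1)) :=
    mu_mono hμ (nIdx_lt hμ hj).le
  have h2 : μ (idxQ μ expRate (nIdx μ j + 1)) ≤ θ * expRate (nIdx μ j + 1 - 1) :=
    idxQ_ub hμ hθ hμr _
  have h3 : expRate (nIdx μ j + 1 - 1) = Real.exp 1 * expRate (nIdx μ j - 1) := by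
    unfold expRate
    rw [← Real.exp_add]
    congr 1
    have : 1 ≤ nIdx μ j := hn
    rw [Nat.add_sub_cancel, Nat.cast_sub this]
    push_cast
    ring
  have h4 : expRate (nIdx μ j - 1) < μ (idxQ μ expRate (nIdx μ j)) := idxQ_lb hμ _
  calc μ j ≤ θ * expRate (nIdx μ j + 1 - 1) := h1.trans h2
    _ = θ * (Real.exp 1 * expRate (nIdx μ j - 1)) := by rw [h3]
    _ ≤ θ * (Real.exp 1 * μ (idxQ μ expRate (nIdx μ j))) := by
        refine mul_le_mul_of_nonneg_left ?_ (by linarith)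
        exact mul_le_mul_of_nonneg_left h4.le (Real.exp_pos 1).le
    _ = (θ * Real.exp 1) * μ (idxQ μ expRate (nIdx μ j)) := by ring

/-- within a block, `μ (idx (nIdx j)) ≤ μ j`. -/
theorem mu_block_lb {μ : ℕ → ℝ} (hμ : IsGrowthRate μ) {j : ℕ} (hj : 1 ≤ j) :
    μ (idxQ μ expRate (nIdx μ j)) ≤ μ j := mu_mono hμ (nIdx_le hμ hj)

/-- `expRate (nIdx j - 1)` is within a factor `θ²e` of `μ j`. -/
theorem exp_nIdx_bounds {μ : ℕ → ℝ} (hμ : IsGrowthRate μ) {θ : ℝ} (hθ : 1 ≤ θ)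
    (hμr : ∀ n, μ (n + 1) / μ n ≤ θ) {j : ℕ} (hj : 1 ≤ j) :
    μ j ≤ (θ ^ 2 * Real.exp 1) * expRate (nIdx μ j - 1) ∧
      expRate (nIdx μ j - 1) ≤ μ j := by
  have h1 : expRate (nIdx μ j - 1) < μ (idxQ μ expRate (nIdx μ j)) := idxQ_lb hμ _
  have h2 : μ (idxQ μ expRate (nIdx μ j)) ≤ θ * expRate (nIdx μ j - 1) :=
    idxQ_ub hμ hθ hμr _
  have h3 := mu_block_ub hμ hθ hμr hj
  have h4 := mu_block_lb hμ hj
  have h5 := expRate_pos (nIdx μ j - 1)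
  constructor
  · nlinarith [Real.exp_pos (1:ℝ), mu_pos hμ (idxQ μ expRate (nIdx μ j))]
  · linarith

/-- comparison of `e^{nIdx k} / e^{nIdx m}` with `μ k / μ m` for `1 ≤ m ≤ k`. -/
theorem exp_nIdx_ratio {μ : ℕ → ℝ} (hμ : IsGrowthRate μ) {θ : ℝ} (hθ : 1 ≤ θ)
    (hμr : ∀ n, μ (n + 1) / μ n ≤ θ) {m k : ℕ} (hm : 1 ≤ m) (hk : m ≤ k) :
    expRate (nIdx μ k) / expRate (nIdx μ m)
        ≤ (θ ^ 2 * Real.exp 1) * (μ k / μ m) ∧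
      μ k / μ m ≤ (θ ^ 2 * Real.exp 1) * (expRate (nIdx μ k) / expRate (nIdx μ m)) := by
  have hm' : 1 ≤ k := hm.trans hk
  rw [← expRate_ratio_shift (nIdx_pos hμ hm) (nIdx_pos hμ hm')]
  obtain ⟨ha1, ha2⟩ := exp_nIdx_bounds hμ hθ hμr hm
  obtain ⟨hb1, hb2⟩ := exp_nIdx_bounds hμ hθ hμr hm'
  set C := θ ^ 2 * Real.exp 1 with hC
  have hC1 : 1 ≤ C := by
    have := Real.add_one_le_exp (1:ℝ)
    nlinarith
  have hEm : 0 < expRate (nIdx μ m - 1) := expRate_pos _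
  have hEk : 0 < expRate (nIdx μ k - 1) := expRate_pos _
  have hμm : 0 < μ m := mu_pos hμ m
  have hμk : 0 < μ k := mu_pos hμ k
  constructor
  · rw [show C * (μ k / μ m) = (C * μ k) / μ m by ring, div_le_div_iff₀ hEm hμm]
    nlinarith
  · rw [show C * (expRate (nIdx μ k - 1) / expRate (nIdx μ m - 1))
        = (C * expRate (nIdx μ k - 1)) / expRate (nIdx μ m - 1) by ring,
      div_le_div_iff₀ hμm hEm]
    nlinarith

end SpecAux
namespace SpecAux

variable {X : Type*} [NormedAddCommGroup X] [NormedSpace ℝ X]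

theorem comm_iter (A : ℕ → X ≃L[ℝ] X) (P : ℕ → X →L[ℝ] X)
    (hstep : ∀ j, 1 ≤ j → ∀ x, A j (P j x) = P (j + 1) (A j x)) :
    ∀ {k m : ℕ}, 1 ≤ k → k ≤ m → ∀ x, evolE A m k (P k x) = P m (evolE A m k x) := by
  intro k m hk h
  induction m, h using Nat.le_induction with
  | base => intro x; rw [evolE_self, evolE_self]
  | succ m hkm ih =>
    intro x
    rw [evolE_succ A hkm, evolE_succ A hkm, ih, hstep m (hk.trans hkm)]

theorem smul_vec_cancel {c : ℝ} (hc : c ≠ 0) {x y : X} (h : c • x = c • y) : x = y :=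
  smul_right_injective X hc h

theorem bijOn_smul_equiv (E : X ≃L[ℝ] X) {c : ℝ} (hc : c ≠ 0) (P P' : X →L[ℝ] X)
    (hcom : ∀ x, E (P x) = P' (E x)) :
    Set.BijOn (⇑(c • (E : X →L[ℝ] X))) {x : X | P x = 0} {x : X | P' x = 0} := by
  refine ⟨?_, ?_, ?_⟩
  · intro x hx
    have hx' : P x = 0 := hx
    show P' ((c • (E : X →L[ℝ] X)) x) = 0
    have h1 : (c • (E : X →L[ℝ] X)) x = c • E x := rfl
    rw [h1, map_smul, ← hcom, hx', map_zero, smul_zero]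
  · intro x _ y _ hxy
    have h1 : c • (E x) = c • (E y) := hxy
    exact E.injective (smul_vec_cancel hc h1)
  · intro y hy
    have hy' : P' y = 0 := hy
    refine ⟨c⁻¹ • E.symm y, ?_, ?_⟩
    · show P (c⁻¹ • E.symm y) = 0
      rw [map_smul]
      have h2 : P (E.symm y) = 0 := by
        apply E.injective
        rw [hcom, E.apply_symm_apply, hy', map_zero]
      rw [h2, smul_zero]
    · show c • E (c⁻¹ • E.symm y) = y
      rw [map_smul, E.apply_symm_apply, smul_smul, mul_inv_cancel₀ hc, one_smul]

theorem comm_of_scaled {A : ℕ → X ≃L[ℝ] X} {c : ℕ → ℝ} {P : ℕ → X →L[ℝ] X}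
    (hc : ∀ k, c k ≠ 0)
    (h : ∀ k, 1 ≤ k → ((fun n => c n • (A n : X →L[ℝ] X)) k).comp (P k)
      = (P (k + 1)).comp ((fun n => c n • (A n : X →L[ℝ] X)) k)) :
    ∀ k, 1 ≤ k → ∀ x, A k (P k x) = P (k + 1) (A k x) := by
  intro k hk x
  have h1 := ContinuousLinearMap.ext_iff.mp (h k hk) x
  simp only [ContinuousLinearMap.comp_apply, ContinuousLinearMap.smul_apply,
    ContinuousLinearEquiv.coe_coe, map_smul] at h1
  exact smul_vec_cancel (hc k) h1

theorem evolE_QseqE (A : ℕ → X ≃L[ℝ] X) {μ : ℕ → ℝ} (hμ : IsGrowthRate μ)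
    {k m : ℕ} (h : k ≤ m) (x : X) :
    evolE (QseqE A μ expRate) m k x
      = evolE A (idxQ μ expRate m) (idxQ μ expRate k) x := by
  induction m, h using Nat.le_induction with
  | base => rw [evolE_self, evolE_self]
  | succ m hkm ih =>
    rw [evolE_succ _ hkm, ih]
    show evolE A (idxQ μ expRate (m + 1)) (idxQ μ expRate m) _ = _
    exact evolE_comp A (idxQ_mono hμ hkm) (idxQ_mono hμ (Nat.le_succ m)) x

theorem evol_Qscaled (A : ℕ → X ≃L[ℝ] X) {μ : ℕ → ℝ} (hμ : IsGrowthRate μ) (l : ℝ)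
    {k m : ℕ} (h : k ≤ m) (x : X) :
    evol (fun n => Real.exp (-l) • (QseqE A μ expRate n : X →L[ℝ] X)) m k x
      = ((expRate m / expRate k) ^ (-l)) • evolE A (idxQ μ expRate m) (idxQ μ expRate k) x := by
  rw [evol_smul (QseqE A μ expRate) _ h, evolE_QseqE A hμ h]
  congr 1
  rw [Finset.prod_const, Nat.card_Ico]
  have h1 : expRate m / expRate k = Real.exp (((m - k : ℕ) : ℝ)) := by
    unfold expRate
    rw [← Real.exp_sub, Nat.cast_sub h]
  rw [h1, exp_rpow, ← Real.exp_nat_mul, mul_comm]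

end SpecAux
namespace SpecAux

variable {X : Type*} [NormedAddCommGroup X] [NormedSpace ℝ X]

theorem forward_dir {μ : ℕ → ℝ} (hμ : IsGrowthRate μ) {θ : ℝ} (hθ : 1 ≤ θ)
    (hμr : ∀ n, μ (n + 1) / μ n ≤ θ) (A : ℕ → X ≃L[ℝ] X) (l : ℝ)
    (h : MuDichotomy μ (scaledSys μ A l)) :
    MuDichotomy expRate (fun n => Real.exp (-l) • (QseqE A μ expRate n : X →L[ℝ] X)) := by
  obtain ⟨P, ⟨⟨hPP, hPcom, hPbij⟩, N, ν, hN, hν, hD1, hD2⟩⟩ := h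
  have hθ0 : (0 : ℝ) < θ := lt_of_lt_of_le one_pos hθ
  beta_reduce at hD1 hD2
  have hscal : ∀ n, ((μ (n + 1) / μ n) ^ (-l) : ℝ) ≠ 0 := fun n =>
    (Real.rpow_pos_of_pos (div_pos (mu_pos hμ _) (mu_pos hμ _)) _).ne'
  have hAcom : ∀ k, 1 ≤ k → ∀ x, A k (P k x) = P (k + 1) (A k x) :=
    comm_of_scaled hscal hPcom
  have hAiter : ∀ {k m : ℕ}, 1 ≤ k → k ≤ m → ∀ x,
      evolE A m k (P k x) = P m (evolE A m k x) := comm_iter A P hAcom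
  refine ⟨fun n => P (idxQ μ expRate n), ⟨?_, ?_, ?_⟩,
    N * θ ^ (|l| + ν), ν, ?_, hν, ?_, ?_⟩
  · exact fun k _ => hPP _ (idxQ_pos μ k)
  · intro k _
    ext x
    show Real.exp (-l) • evolE A _ _ (P (idxQ μ expRate k) x)
      = P (idxQ μ expRate (k + 1)) (Real.exp (-l) • evolE A _ _ x)
    rw [map_smul, hAiter (idxQ_pos μ k) (idxQ_mono hμ (Nat.le_succ k))]
  · intro k _
    exact bijOn_smul_equiv (QseqE A μ expRate k) (Real.exp_ne_zero _) _ _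
      (fun x => hAiter (idxQ_pos μ k) (idxQ_mono hμ (Nat.le_succ k)) x)
  · -- 1 ≤ N * θ ^ (|l| + ν)
    have h1 : (1 : ℝ) ≤ θ ^ (|l| + ν) :=
      Real.one_le_rpow hθ (by positivity)
    nlinarith
  · -- forward estimate
    intro k m hk hkm x
    beta_reduce
    rw [evol_Qscaled A hμ l hkm]
    set E := expRate m / expRate k with hE
    set r := μ (idxQ μ expRate m) / μ (idxQ μ expRate k) with hr
    have hE0 : 0 < E := expRate_div_pos k m
    have hr0 : 0 < r := div_pos (mu_pos hμ _) (mu_pos hμ _)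
    obtain ⟨hra, hrb⟩ := mu_idx_ratio hμ hθ hμr hk (hk.trans hkm)
    -- extract the bound on ‖Φ (P x)‖ from hD1
    have h2 := hD1 (idxQ μ expRate k) (idxQ μ expRate m) (idxQ_pos μ k)
      (idxQ_mono hμ hkm) x
    rw [evol_scaledSys hμ A l (idxQ_mono hμ hkm)] at h2
    have h3 : ‖(r ^ (-l)) • evolE A (idxQ μ expRate m) (idxQ μ expRate k)
        (P (idxQ μ expRate k) x)‖
        = r ^ (-l) * ‖evolE A (idxQ μ expRate m) (idxQ μ expRate k)
          (P (idxQ μ expRate k) x)‖ := by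
      rw [norm_smul, Real.norm_eq_abs, abs_of_pos (Real.rpow_pos_of_pos hr0 _)]
    rw [h3] at h2
    have hrl0 : 0 < r ^ (-l) := Real.rpow_pos_of_pos hr0 _
    have h4 : ‖evolE A (idxQ μ expRate m) (idxQ μ expRate k) (P (idxQ μ expRate k) x)‖
        ≤ r ^ l * (N * r ^ (-ν) * ‖x‖) := by
      rw [← mul_le_mul_iff_right₀ hrl0]
      calc r ^ (-l) * ‖evolE A (idxQ μ expRate m) (idxQ μ expRate k)
            (P (idxQ μ expRate k) x)‖ ≤ N * r ^ (-ν) * ‖x‖ := h2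
        _ = r ^ (-l) * (r ^ l * (N * r ^ (-ν) * ‖x‖)) := by
            rw [← mul_assoc, mul_comm (r ^ (-l)) (r ^ l), rpow_mul_rpow_neg hr0 l,
              one_mul]
    rw [norm_smul, Real.norm_eq_abs, abs_of_pos (Real.rpow_pos_of_pos hE0 _)]
    have h5 : r ^ l ≤ θ ^ |l| * E ^ l := rpow_ratio_bound hE0 hθ hra hrb l
    have h6 : r ^ (-ν) ≤ θ ^ ν * E ^ (-ν) := by
      have := rpow_ratio_bound hE0 hθ hra hrb (-ν)
      rwa [abs_neg, abs_of_pos hν] at this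
    have hEl : 0 < E ^ (-l) := Real.rpow_pos_of_pos hE0 _
    calc E ^ (-l) * ‖evolE A (idxQ μ expRate m) (idxQ μ expRate k)
          (P (idxQ μ expRate k) x)‖
        ≤ E ^ (-l) * (r ^ l * (N * r ^ (-ν) * ‖x‖)) :=
          mul_le_mul_of_nonneg_left h4 hEl.le
      _ ≤ E ^ (-l) * ((θ ^ |l| * E ^ l) * (N * (θ ^ ν * E ^ (-ν)) * ‖x‖)) := by
          gcongr <;> first
            | exact (Real.rpow_pos_of_pos hr0 _).le
            | linarith
      _ = (E ^ (-l) * E ^ l) * ((θ ^ |l| * θ ^ ν) * (N * E ^ (-ν) * ‖x‖)) := by ring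
      _ = N * θ ^ (|l| + ν) * E ^ (-ν) * ‖x‖ := by
          rw [← Real.rpow_add hE0, neg_add_cancel, Real.rpow_zero, one_mul,
            ← Real.rpow_add hθ0]
          ring
  · -- backward estimate
    intro m k hm hmk x z hz hev
    beta_reduce
    beta_reduce at hz hev
    rw [evol_Qscaled A hμ l hmk] at hev
    set E := expRate k / expRate m with hE
    set r := μ (idxQ μ expRate k) / μ (idxQ μ expRate m) with hr
    have hE0 : 0 < E := expRate_div_pos m k
    have hr0 : 0 < r := div_pos (mu_pos hμ _) (mu_pos hμ _)
    obtain ⟨hra, hrb⟩ := mu_idx_ratio hμ hθ hμr hm (hm.trans hmk)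
    set c := r ^ (-l) * E ^ l with hc
    have hc0 : 0 < c := mul_pos (Real.rpow_pos_of_pos hr0 _) (Real.rpow_pos_of_pos hE0 _)
    -- Φ z = E^l • (x - P x)
    have h1 : evolE A (idxQ μ expRate k) (idxQ μ expRate m) z
        = E ^ l • (x - P (idxQ μ expRate k) x) := by
      calc evolE A (idxQ μ expRate k) (idxQ μ expRate m) z
          = (E ^ l * E ^ (-l)) • evolE A (idxQ μ expRate k) (idxQ μ expRate m) z := by
            rw [rpow_mul_rpow_neg hE0 l, one_smul]
        _ = E ^ l • (E ^ (-l) • evolE A (idxQ μ expRate k) (idxQ μ expRate m) z) := by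
            rw [smul_smul]
        _ = E ^ l • (x - P (idxQ μ expRate k) x) := by rw [hev]
    have h2 : evol (scaledSys μ A l) (idxQ μ expRate k) (idxQ μ expRate m) z
        = c • x - P (idxQ μ expRate k) (c • x) := by
      rw [evol_scaledSys hμ A l (idxQ_mono hμ hmk), h1, map_smul, ← smul_sub,
        smul_smul, ← hr, ← hc]
    have h3 := hD2 (idxQ μ expRate m) (idxQ μ expRate k) (idxQ_pos μ m)
      (idxQ_mono hμ hmk) (c • x) z hz h2
    have h4 : ‖c • x‖ = c * ‖x‖ := by
      rw [norm_smul, Real.norm_eq_abs, abs_of_pos hc0]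
    rw [h4] at h3
    -- bound c ≤ θ^|l|
    have h5 : r ^ (-l) ≤ θ ^ |l| * E ^ (-l) := by
      have := rpow_ratio_bound hE0 hθ hra hrb (-l)
      rwa [abs_neg] at this
    have h6 : c ≤ θ ^ |l| := by
      calc c ≤ (θ ^ |l| * E ^ (-l)) * E ^ l :=
            mul_le_mul_of_nonneg_right h5 (Real.rpow_pos_of_pos hE0 _).le
        _ = θ ^ |l| * (E ^ l * E ^ (-l)) := by ring
        _ = θ ^ |l| := by rw [rpow_mul_rpow_neg hE0, mul_one]
    have h7 : r ^ (-ν) ≤ θ ^ ν * E ^ (-ν) := by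
      have := rpow_ratio_bound hE0 hθ hra hrb (-ν)
      rwa [abs_neg, abs_of_pos hν] at this
    calc ‖z‖ ≤ N * r ^ (-ν) * (c * ‖x‖) := h3
      _ ≤ N * (θ ^ ν * E ^ (-ν)) * (θ ^ |l| * ‖x‖) := by
          gcongr <;> first
            | exact (Real.rpow_pos_of_pos hr0 _).le
            | linarith
      _ = N * (θ ^ |l| * θ ^ ν) * E ^ (-ν) * ‖x‖ := by ring
      _ = N * θ ^ (|l| + ν) * E ^ (-ν) * ‖x‖ := by rw [← Real.rpow_add hθ0]

end SpecAux
namespace SpecAux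

variable {X : Type*} [NormedAddCommGroup X] [NormedSpace ℝ X]

theorem evolE_back_step (A : ℕ → X ≃L[ℝ] X) {k j : ℕ} (h : k ≤ j) (x : X) :
    evolE A k (j + 1) (A j x) = evolE A k j x := by
  apply evolE_inj A (j + 1) k
  rw [evolE_cancel, ← evolE_comp A h (Nat.le_succ j) (evolE A k j x), evolE_cancel,
    evolE_step]

theorem evolE_long_short (A : ℕ → X ≃L[ℝ] X) {p q r : ℕ} (hpq : p ≤ q) (hqr : q ≤ r)
    (u : X) : evolE A r p (evolE A p q u) = evolE A r q u := by
  have h := evolE_comp A hpq hqr (evolE A p q u)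
  rw [evolE_cancel A p q u] at h
  exact h.symm

theorem norm_le_of_smul_rpow {F : ℝ} (hF : 0 < F) {s : ℝ} {v : X} {b : ℝ}
    (h : ‖F ^ (-s) • v‖ ≤ b) : ‖v‖ ≤ F ^ s * b := by
  rw [norm_smul, Real.norm_eq_abs, abs_of_pos (Real.rpow_pos_of_pos hF _)] at h
  have h2 := mul_le_mul_of_nonneg_left h (Real.rpow_pos_of_pos hF s).le
  rwa [← mul_assoc, rpow_mul_rpow_neg hF s, one_mul] at h2

/-- block operator norm bound, forward. -/
theorem opnorm_block_fwd {μ : ℕ → ℝ} (hμ : IsGrowthRate μ) {θ : ℝ} (hθ : 1 ≤ θ)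
    (hμr : ∀ n, μ (n + 1) / μ n ≤ θ) (A : ℕ → X ≃L[ℝ] X) {K a : ℝ} (hK : 0 < K)
    (ha : 0 < a)
    (hfwd : ∀ k m : ℕ, 1 ≤ k → k ≤ m → ‖evolE A m k‖ ≤ K * (μ m / μ k) ^ a)
    {j : ℕ} (hj : 1 ≤ j) :
    ‖evolE A j (idxQ μ expRate (nIdx μ j))‖ ≤ K * (θ * Real.exp 1) ^ a := by
  have h1 := hfwd (idxQ μ expRate (nIdx μ j)) j (idxQ_pos μ _) (nIdx_le hμ hj)
  refine h1.trans ?_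
  refine mul_le_mul_of_nonneg_left ?_ hK.le
  refine Real.rpow_le_rpow (div_nonneg (mu_pos hμ _).le (mu_pos hμ _).le) ?_ ha.le
  · rw [div_le_iff₀ (mu_pos hμ _)]
    exact mu_block_ub hμ hθ hμr hj

/-- block operator norm bound, backward. -/
theorem opnorm_block_bwd {μ : ℕ → ℝ} (hμ : IsGrowthRate μ) {θ : ℝ} (hθ : 1 ≤ θ)
    (hμr : ∀ n, μ (n + 1) / μ n ≤ θ) (A : ℕ → X ≃L[ℝ] X) {K a : ℝ} (hK : 0 < K)
    (ha : 0 < a)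
    (hbwd : ∀ m k : ℕ, 1 ≤ m → m ≤ k → ‖evolE A m k‖ ≤ K * (μ k / μ m) ^ a)
    {j : ℕ} (hj : 1 ≤ j) :
    ‖evolE A (idxQ μ expRate (nIdx μ j)) j‖ ≤ K * (θ * Real.exp 1) ^ a := by
  have h1 := hbwd (idxQ μ expRate (nIdx μ j)) j (idxQ_pos μ _) (nIdx_le hμ hj)
  refine h1.trans ?_
  refine mul_le_mul_of_nonneg_left ?_ hK.le
  refine Real.rpow_le_rpow (div_nonneg (mu_pos hμ _).le (mu_pos hμ _).le) ?_ ha.le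
  · rw [div_le_iff₀ (mu_pos hμ _)]
    exact mu_block_ub hμ hθ hμr hj

end SpecAux
namespace SpecAux

variable {X : Type*} [NormedAddCommGroup X] [NormedSpace ℝ X]

theorem norm_le_of_smul_rpow' {F : ℝ} (hF : 0 < F) {s : ℝ} {v : X} {b : ℝ}
    (h : ‖F ^ s • v‖ ≤ b) : ‖v‖ ≤ F ^ (-s) * b := by
  rw [norm_smul, Real.norm_eq_abs, abs_of_pos (Real.rpow_pos_of_pos hF _)] at h
  have h2 := mul_le_mul_of_nonneg_left h (Real.rpow_pos_of_pos hF (-s)).le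
  rwa [← mul_assoc, mul_comm (F ^ (-s)) (F ^ s), rpow_mul_rpow_neg hF s, one_mul] at h2

theorem final_bound_max {R C ν : ℝ} (hR : 0 < R) {x z : ℝ} (hx : 0 ≤ x)
    (hz : z ≤ C * R ^ (-ν) * x) : z ≤ max 1 C * R ^ (-ν) * x := by
  refine hz.trans ?_
  have h0 : 0 ≤ R ^ (-ν) * x := mul_nonneg (Real.rpow_pos_of_pos hR _).le hx
  calc C * R ^ (-ν) * x = C * (R ^ (-ν) * x) := by ring
    _ ≤ max 1 C * (R ^ (-ν) * x) := mul_le_mul_of_nonneg_right (le_max_right _ _) h0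
    _ = max 1 C * R ^ (-ν) * x := by ring

theorem final_bound1 {R F Ka C1 N ν l : ℝ} (hR : 0 < R) (hF : 0 < F) (hC1 : 1 ≤ C1)
    (hFa : F ≤ C1 * R) (hFb : R ≤ C1 * F) (hKa : 0 ≤ Ka) (hN : 0 ≤ N) (hν : 0 < ν)
    {x z : ℝ} (hx : 0 ≤ x)
    (hz : z ≤ R ^ (-l) * (Ka * (F ^ l * (N * F ^ (-ν) * (Ka * x))))) :
    z ≤ max 1 (N * Ka ^ 2 * C1 ^ (|l| + ν)) * R ^ (-ν) * x := by
  have hC10 : (0:ℝ) < C1 := lt_of_lt_of_le one_pos hC1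
  have h5 : F ^ l ≤ C1 ^ |l| * R ^ l := rpow_ratio_bound hR hC1 hFa hFb l
  have h6 : F ^ (-ν) ≤ C1 ^ ν * R ^ (-ν) := by
    have h := rpow_ratio_bound hR hC1 hFa hFb (-ν)
    rwa [abs_neg, abs_of_pos hν] at h
  refine final_bound_max hR hx (hz.trans ?_)
  calc R ^ (-l) * (Ka * (F ^ l * (N * F ^ (-ν) * (Ka * x))))
      ≤ R ^ (-l) * (Ka * ((C1 ^ |l| * R ^ l) * (N * (C1 ^ ν * R ^ (-ν)) * (Ka * x)))) := by
        gcongr <;> first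
          | exact (Real.rpow_pos_of_pos hR _).le
          | exact (Real.rpow_pos_of_pos hF _).le
          | assumption
          | positivity
    _ = (R ^ (-l) * R ^ l) * ((C1 ^ |l| * C1 ^ ν) * (N * Ka ^ 2 * R ^ (-ν) * x)) := by
        ring
    _ = N * Ka ^ 2 * C1 ^ (|l| + ν) * R ^ (-ν) * x := by
        rw [mul_comm (R ^ (-l)) (R ^ l), rpow_mul_rpow_neg hR l, one_mul,
          ← Real.rpow_add hC10]
        ring

theorem final_bound2 {R F Ka C1 N ν l : ℝ} (hR : 0 < R) (hF : 0 < F) (hC1 : 1 ≤ C1)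
    (hFa : F ≤ C1 * R) (hFb : R ≤ C1 * F) (hKa : 0 ≤ Ka) (hN : 0 ≤ N) (hν : 0 < ν)
    {x z : ℝ} (hx : 0 ≤ x)
    (hz : z ≤ R ^ l * (Ka * (F ^ (-l) * (N * F ^ (-ν) * (Ka * x))))) :
    z ≤ max 1 (N * Ka ^ 2 * C1 ^ (|l| + ν)) * R ^ (-ν) * x := by
  have hC10 : (0:ℝ) < C1 := lt_of_lt_of_le one_pos hC1
  have h5 : F ^ (-l) ≤ C1 ^ |l| * R ^ (-l) := by
    have h := rpow_ratio_bound hR hC1 hFa hFb (-l)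
    rwa [abs_neg] at h
  have h6 : F ^ (-ν) ≤ C1 ^ ν * R ^ (-ν) := by
    have h := rpow_ratio_bound hR hC1 hFa hFb (-ν)
    rwa [abs_neg, abs_of_pos hν] at h
  refine final_bound_max hR hx (hz.trans ?_)
  calc R ^ l * (Ka * (F ^ (-l) * (N * F ^ (-ν) * (Ka * x))))
      ≤ R ^ l * (Ka * ((C1 ^ |l| * R ^ (-l)) * (N * (C1 ^ ν * R ^ (-ν)) * (Ka * x)))) := by
        gcongr <;> first
          | exact (Real.rpow_pos_of_pos hR _).le
          | exact (Real.rpow_pos_of_pos hF _).le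
          | assumption
          | positivity
    _ = (R ^ l * R ^ (-l)) * ((C1 ^ |l| * C1 ^ ν) * (N * Ka ^ 2 * R ^ (-ν) * x)) := by
        ring
    _ = N * Ka ^ 2 * C1 ^ (|l| + ν) * R ^ (-ν) * x := by
        rw [rpow_mul_rpow_neg hR l, one_mul, ← Real.rpow_add hC10]
        ring

end SpecAux
namespace SpecAux

variable {X : Type*} [NormedAddCommGroup X] [NormedSpace ℝ X]

theorem backward_dir {μ : ℕ → ℝ} (hμ : IsGrowthRate μ) {θ : ℝ} (hθ : 1 ≤ θ)
    (hμr : ∀ n, μ (n + 1) / μ n ≤ θ) (A : ℕ → X ≃L[ℝ] X) {K a : ℝ} (hK : 0 < K)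
    (ha : 0 < a)
    (hfwd : ∀ k m : ℕ, 1 ≤ k → k ≤ m → ‖evolE A m k‖ ≤ K * (μ m / μ k) ^ a)
    (hbwd : ∀ m k : ℕ, 1 ≤ m → m ≤ k → ‖evolE A m k‖ ≤ K * (μ k / μ m) ^ a)
    (l : ℝ)
    (h : MuDichotomy expRate (fun n => Real.exp (-l) • (QseqE A μ expRate n : X →L[ℝ] X))) :
    MuDichotomy μ (scaledSys μ A l) := by
  obtain ⟨Ph, ⟨⟨hPP, hPcom, hPbij⟩, N, ν, hN, hν, hD1, hD2⟩⟩ := h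
  beta_reduce at hD1 hD2
  have hθ0 : (0:ℝ) < θ := lt_of_lt_of_le one_pos hθ
  have hN0 : (0:ℝ) ≤ N := le_trans zero_le_one hN
  -- commutation of Ph through the Q system
  have hQcom : ∀ n, 1 ≤ n → ∀ x,
      QseqE A μ expRate n (Ph n x) = Ph (n + 1) (QseqE A μ expRate n x) :=
    comm_of_scaled (fun _ => Real.exp_ne_zero _) hPcom
  have hQiterA : ∀ {n n' : ℕ}, 1 ≤ n → n ≤ n' → ∀ x,
      evolE A (idxQ μ expRate n') (idxQ μ expRate n) (Ph n x)
        = Ph n' (evolE A (idxQ μ expRate n') (idxQ μ expRate n) x) := by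
    intro n n' hn hnn' x
    have h0 := comm_iter (QseqE A μ expRate) Ph hQcom hn hnn' x
    rwa [evolE_QseqE A hμ hnn' (Ph n x), evolE_QseqE A hμ hnn' x] at h0
  have hPhP : ∀ n, 1 ≤ n → ∀ x, Ph n (Ph n x) = Ph n x := fun n hn x =>
    ContinuousLinearMap.ext_iff.mp (hPP n hn) x
  -- projections at original times
  set Pd : ℕ → X →L[ℝ] X := fun j =>
    (evolE A j (idxQ μ expRate (nIdx μ j))).comp
      ((Ph (nIdx μ j)).comp (evolE A (idxQ μ expRate (nIdx μ j)) j)) with hPdDef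
  have hPd_apply : ∀ j x, Pd j x
      = evolE A j (idxQ μ expRate (nIdx μ j))
          (Ph (nIdx μ j) (evolE A (idxQ μ expRate (nIdx μ j)) j x)) := fun j x => rfl
  -- single-step commutation
  have hPdcom : ∀ j, 1 ≤ j → ∀ x, A j (Pd j x) = Pd (j + 1) (A j x) := by
    intro j hj x
    have hj1 : 1 ≤ j + 1 := Nat.le_succ_of_le hj
    have hnpos : 1 ≤ nIdx μ j := nIdx_pos hμ hj
    have hnn' : nIdx μ j ≤ nIdx μ (j + 1) := nIdx_mono hμ hj (Nat.le_succ j)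
    have hinj : idxQ μ expRate (nIdx μ j) ≤ j := nIdx_le hμ hj
    have hlhs : A j (Pd j x)
        = evolE A (j + 1) (idxQ μ expRate (nIdx μ j))
            (Ph (nIdx μ j) (evolE A (idxQ μ expRate (nIdx μ j)) j x)) := by
      rw [hPd_apply, ← evolE_succ A hinj]
    rcases eq_or_lt_of_le hnn' with heq | hlt
    · rw [hlhs, hPd_apply, ← heq, evolE_back_step A hinj]
    · have hin' : idxQ μ expRate (nIdx μ (j + 1)) = j + 1 := by
        have h1 : idxQ μ expRate (nIdx μ (j + 1)) ≤ j + 1 := nIdx_le hμ hj1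
        have h2 : j + 1 ≤ idxQ μ expRate (nIdx μ j + 1) := nIdx_lt hμ hj
        have h3 : idxQ μ expRate (nIdx μ j + 1) ≤ idxQ μ expRate (nIdx μ (j + 1)) :=
          idxQ_mono hμ hlt
        omega
      have hkey := hQiterA hnpos hnn' (evolE A (idxQ μ expRate (nIdx μ j)) j x)
      rw [hin'] at hkey
      have h4 : evolE A (j + 1) (idxQ μ expRate (nIdx μ j))
          (evolE A (idxQ μ expRate (nIdx μ j)) j x) = A j x := by
        rw [evolE_long_short A hinj (Nat.le_succ j), evolE_step]
      rw [hlhs, hkey, h4, hPd_apply, hin', evolE_self, evolE_self]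
  have hPdP : ∀ j, 1 ≤ j → ∀ x, Pd j (Pd j x) = Pd j x := by
    intro j hj x
    rw [hPd_apply, hPd_apply, evolE_cancel, hPhP _ (nIdx_pos hμ hj)]
  have hscal : ∀ k : ℕ, ((μ (k + 1) / μ k) ^ (-l) : ℝ) ≠ 0 := fun k =>
    (Real.rpow_pos_of_pos (div_pos (mu_pos hμ _) (mu_pos hμ _)) _).ne'
  -- constants
  have hKa0 : (0:ℝ) ≤ K * (θ * Real.exp 1) ^ a :=
    mul_nonneg hK.le (Real.rpow_nonneg (mul_nonneg hθ0.le (Real.exp_pos 1).le) a)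
  have hC11 : (1:ℝ) ≤ θ ^ 2 * Real.exp 1 := by
    nlinarith [Real.add_one_le_exp (1:ℝ)]
  refine ⟨Pd, ⟨?_, ?_, ?_⟩,
    max 1 (N * (K * (θ * Real.exp 1) ^ a) ^ 2 * (θ ^ 2 * Real.exp 1) ^ (|l| + ν)), ν,
    le_max_left _ _, hν, ?_, ?_⟩
  · intro k hk
    ext x
    exact hPdP k hk x
  · intro k hk
    ext x
    show scaledSys μ A l k (Pd k x) = Pd (k + 1) (scaledSys μ A l k x)
    have h1 : scaledSys μ A l k (Pd k x)
        = ((μ (k + 1) / μ k) ^ (-l)) • (A k (Pd k x)) := rfl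
    have h2 : scaledSys μ A l k x = ((μ (k + 1) / μ k) ^ (-l)) • (A k x) := rfl
    rw [h1, h2, map_smul, hPdcom k hk]
  · intro k hk
    exact bijOn_smul_equiv (A k) (hscal k) (Pd k) (Pd (k + 1)) (hPdcom k hk)
  · -- D1
    intro k m hk hkm x
    beta_reduce
    have hm : 1 ≤ m := hk.trans hkm
    have hnk : 1 ≤ nIdx μ k := nIdx_pos hμ hk
    have hnkm : nIdx μ k ≤ nIdx μ m := nIdx_mono hμ hk hkm
    have hik : idxQ μ expRate (nIdx μ k) ≤ k := nIdx_le hμ hk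
    have him : idxQ μ expRate (nIdx μ m) ≤ m := nIdx_le hμ hm
    have hiki : idxQ μ expRate (nIdx μ k) ≤ idxQ μ expRate (nIdx μ m) :=
      idxQ_mono hμ hnkm
    have hR0 : 0 < μ m / μ k := div_pos (mu_pos hμ m) (mu_pos hμ k)
    have hF0 : 0 < expRate (nIdx μ m) / expRate (nIdx μ k) := expRate_div_pos _ _
    obtain ⟨hFa, hFb⟩ := exp_nIdx_ratio hμ hθ hμr hk hkm
    rw [evol_scaledSys hμ A l hkm, norm_smul, Real.norm_eq_abs,
      abs_of_pos (Real.rpow_pos_of_pos hR0 _)]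
    -- decomposition
    have e1 : evolE A m k (Pd k x)
        = evolE A m (idxQ μ expRate (nIdx μ m))
            (evolE A (idxQ μ expRate (nIdx μ m)) (idxQ μ expRate (nIdx μ k))
              (Ph (nIdx μ k) (evolE A (idxQ μ expRate (nIdx μ k)) k x))) := by
      rw [hPd_apply, evolE_comp A hik hkm, ← evolE_comp A hiki him]
    -- middle estimate
    have e2 : ‖evolE A (idxQ μ expRate (nIdx μ m)) (idxQ μ expRate (nIdx μ k))
        (Ph (nIdx μ k) (evolE A (idxQ μ expRate (nIdx μ k)) k x))‖
        ≤ (expRate (nIdx μ m) / expRate (nIdx μ k)) ^ l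
          * (N * (expRate (nIdx μ m) / expRate (nIdx μ k)) ^ (-ν)
            * ‖evolE A (idxQ μ expRate (nIdx μ k)) k x‖) := by
      apply norm_le_of_smul_rpow hF0
      have h0 := hD1 (nIdx μ k) (nIdx μ m) hnk hnkm
        (evolE A (idxQ μ expRate (nIdx μ k)) k x)
      rwa [evol_Qscaled A hμ l hnkm] at h0
    have e3 : ‖evolE A (idxQ μ expRate (nIdx μ k)) k x‖
        ≤ K * (θ * Real.exp 1) ^ a * ‖x‖ :=
      ((evolE A (idxQ μ expRate (nIdx μ k)) k).le_opNorm x).trans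
        (mul_le_mul_of_nonneg_right (opnorm_block_bwd hμ hθ hμr A hK ha hbwd hk)
          (norm_nonneg x))
    have e4 : ‖evolE A m (idxQ μ expRate (nIdx μ m))‖ ≤ K * (θ * Real.exp 1) ^ a :=
      opnorm_block_fwd hμ hθ hμr A hK ha hfwd hm
    have hnn1 : (0:ℝ) ≤ N * (expRate (nIdx μ m) / expRate (nIdx μ k)) ^ (-ν) :=
      mul_nonneg hN0 (Real.rpow_pos_of_pos hF0 _).le
    have e5 : ‖evolE A m k (Pd k x)‖
        ≤ K * (θ * Real.exp 1) ^ a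
          * ((expRate (nIdx μ m) / expRate (nIdx μ k)) ^ l
            * (N * (expRate (nIdx μ m) / expRate (nIdx μ k)) ^ (-ν)
              * (K * (θ * Real.exp 1) ^ a * ‖x‖))) := by
      rw [e1]
      refine ((evolE A m (idxQ μ expRate (nIdx μ m))).le_opNorm _).trans ?_
      refine (mul_le_mul_of_nonneg_right e4 (norm_nonneg _)).trans ?_
      refine mul_le_mul_of_nonneg_left ?_ hKa0
      refine e2.trans ?_
      refine mul_le_mul_of_nonneg_left ?_ (Real.rpow_pos_of_pos hF0 _).le
      exact mul_le_mul_of_nonneg_left e3 hnn1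
    refine final_bound1 hR0 hF0 hC11 hFa hFb hKa0 hN0 hν (norm_nonneg x) ?_
    exact mul_le_mul_of_nonneg_left e5 (Real.rpow_pos_of_pos hR0 _).le
  · -- D2
    intro m k hm hmk x z hz hev
    beta_reduce
    beta_reduce at hz hev
    have hk : 1 ≤ k := hm.trans hmk
    have hnm : 1 ≤ nIdx μ m := nIdx_pos hμ hm
    have hnmk : nIdx μ m ≤ nIdx μ k := nIdx_mono hμ hm hmk
    have him : idxQ μ expRate (nIdx μ m) ≤ m := nIdx_le hμ hm
    have hik : idxQ μ expRate (nIdx μ k) ≤ k := nIdx_le hμ hk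
    have hii : idxQ μ expRate (nIdx μ m) ≤ idxQ μ expRate (nIdx μ k) :=
      idxQ_mono hμ hnmk
    have hR0 : 0 < μ k / μ m := div_pos (mu_pos hμ k) (mu_pos hμ m)
    have hF0 : 0 < expRate (nIdx μ k) / expRate (nIdx μ m) := expRate_div_pos _ _
    obtain ⟨hFa, hFb⟩ := exp_nIdx_ratio hμ hθ hμr hm hmk
    rw [evol_scaledSys hμ A l hmk] at hev
    have h1 : evolE A k m z = (μ k / μ m) ^ l • (x - Pd k x) := by
      calc evolE A k m z
          = ((μ k / μ m) ^ l * (μ k / μ m) ^ (-l)) • evolE A k m z := by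
            rw [rpow_mul_rpow_neg hR0 l, one_smul]
        _ = (μ k / μ m) ^ l • ((μ k / μ m) ^ (-l) • evolE A k m z) := by rw [smul_smul]
        _ = (μ k / μ m) ^ l • (x - Pd k x) := by rw [hev]
    have h2 : z = (μ k / μ m) ^ l • evolE A m k (x - Pd k x) := by
      rw [← map_smul, ← h1, evolE_cancel]
    have h3 : x - Pd k x
        = evolE A k (idxQ μ expRate (nIdx μ k))
            (evolE A (idxQ μ expRate (nIdx μ k)) k x
              - Ph (nIdx μ k) (evolE A (idxQ μ expRate (nIdx μ k)) k x)) := by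
      rw [map_sub, evolE_cancel, hPd_apply]
    have h4 : evolE A m k (x - Pd k x)
        = evolE A m (idxQ μ expRate (nIdx μ m))
            (evolE A (idxQ μ expRate (nIdx μ m)) (idxQ μ expRate (nIdx μ k))
              (evolE A (idxQ μ expRate (nIdx μ k)) k x
                - Ph (nIdx μ k) (evolE A (idxQ μ expRate (nIdx μ k)) k x))) := by
      rw [h3]
      apply evolE_inj A k m
      rw [evolE_cancel, evolE_comp A him hmk, evolE_long_short A hii hik]
    -- kernel condition
    have hu' : Ph (nIdx μ k) (evolE A (idxQ μ expRate (nIdx μ k)) k x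
        - Ph (nIdx μ k) (evolE A (idxQ μ expRate (nIdx μ k)) k x)) = 0 := by
      rw [map_sub, hPhP _ (hnm.trans hnmk), sub_self]
    have h5 : Ph (nIdx μ m)
        (evolE A (idxQ μ expRate (nIdx μ m)) (idxQ μ expRate (nIdx μ k))
          (evolE A (idxQ μ expRate (nIdx μ k)) k x
            - Ph (nIdx μ k) (evolE A (idxQ μ expRate (nIdx μ k)) k x))) = 0 := by
      have hh := hQiterA hnm hnmk
        (evolE A (idxQ μ expRate (nIdx μ m)) (idxQ μ expRate (nIdx μ k))
          (evolE A (idxQ μ expRate (nIdx μ k)) k x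
            - Ph (nIdx μ k) (evolE A (idxQ μ expRate (nIdx μ k)) k x)))
      rw [evolE_cancel, hu'] at hh
      apply evolE_inj A (idxQ μ expRate (nIdx μ k)) (idxQ μ expRate (nIdx μ m))
      rw [hh, map_zero]
    -- apply hD2 of the Q system
    have h6 := hD2 (nIdx μ m) (nIdx μ k) hnm hnmk
      (evolE A (idxQ μ expRate (nIdx μ k)) k x)
      ((expRate (nIdx μ k) / expRate (nIdx μ m)) ^ l •
        evolE A (idxQ μ expRate (nIdx μ m)) (idxQ μ expRate (nIdx μ k))
          (evolE A (idxQ μ expRate (nIdx μ k)) k x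
            - Ph (nIdx μ k) (evolE A (idxQ μ expRate (nIdx μ k)) k x)))
      (by rw [map_smul, h5, smul_zero])
      (by
        rw [evol_Qscaled A hμ l hnmk, map_smul, smul_smul, mul_comm,
          rpow_mul_rpow_neg hF0 l, one_smul, evolE_cancel])
    have h7 : ‖evolE A (idxQ μ expRate (nIdx μ m)) (idxQ μ expRate (nIdx μ k))
        (evolE A (idxQ μ expRate (nIdx μ k)) k x
          - Ph (nIdx μ k) (evolE A (idxQ μ expRate (nIdx μ k)) k x))‖
        ≤ (expRate (nIdx μ k) / expRate (nIdx μ m)) ^ (-l)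
          * (N * (expRate (nIdx μ k) / expRate (nIdx μ m)) ^ (-ν)
            * ‖evolE A (idxQ μ expRate (nIdx μ k)) k x‖) :=
      norm_le_of_smul_rpow' hF0 h6
    have e3 : ‖evolE A (idxQ μ expRate (nIdx μ k)) k x‖
        ≤ K * (θ * Real.exp 1) ^ a * ‖x‖ :=
      ((evolE A (idxQ μ expRate (nIdx μ k)) k).le_opNorm x).trans
        (mul_le_mul_of_nonneg_right (opnorm_block_bwd hμ hθ hμr A hK ha hbwd hk)
          (norm_nonneg x))
    have e4 : ‖evolE A m (idxQ μ expRate (nIdx μ m))‖ ≤ K * (θ * Real.exp 1) ^ a :=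
      opnorm_block_fwd hμ hθ hμr A hK ha hfwd hm
    have hnn1 : (0:ℝ) ≤ N * (expRate (nIdx μ k) / expRate (nIdx μ m)) ^ (-ν) :=
      mul_nonneg hN0 (Real.rpow_pos_of_pos hF0 _).le
    have e5 : ‖evolE A m k (x - Pd k x)‖
        ≤ K * (θ * Real.exp 1) ^ a
          * ((expRate (nIdx μ k) / expRate (nIdx μ m)) ^ (-l)
            * (N * (expRate (nIdx μ k) / expRate (nIdx μ m)) ^ (-ν)
              * (K * (θ * Real.exp 1) ^ a * ‖x‖))) := by
      rw [h4]
      refine ((evolE A m (idxQ μ expRate (nIdx μ m))).le_opNorm _).trans ?_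
      refine (mul_le_mul_of_nonneg_right e4 (norm_nonneg _)).trans ?_
      refine mul_le_mul_of_nonneg_left ?_ hKa0
      refine h7.trans ?_
      refine mul_le_mul_of_nonneg_left ?_ (Real.rpow_pos_of_pos hF0 _).le
      exact mul_le_mul_of_nonneg_left e3 hnn1
    refine final_bound2 hR0 hF0 hC11 hFa hFb hKa0 hN0 hν (norm_nonneg x) ?_
    rw [h2, norm_smul, Real.norm_eq_abs, abs_of_pos (Real.rpow_pos_of_pos hR0 _)]
    exact mul_le_mul_of_nonneg_left e5 (Real.rpow_pos_of_pos hR0 _).le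

end SpecAux
/-- Theorem 4.1 (`dicspec`): `Σ_{μD,𝔸} = Σ_{ED,ℚ}`. -/
theorem muSpectrum_eq_expSpectrumQ [CompleteSpace X]
    (μ : ℕ → ℝ) (hμ : IsGrowthRate μ) (θ : ℝ) (hθ : 1 ≤ θ)
    (hμr : ∀ n, μ (n + 1) / μ n ≤ θ)
    (A : ℕ → X ≃L[ℝ] X) (K a : ℝ) (hK : 0 < K) (ha : 0 < a)
    (hfwd : ∀ k m : ℕ, 1 ≤ k → k ≤ m → ‖evolE A m k‖ ≤ K * (μ m / μ k) ^ a)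
    (hbwd : ∀ m k : ℕ, 1 ≤ m → m ≤ k → ‖evolE A m k‖ ≤ K * (μ k / μ m) ^ a) :
    muSpectrum μ A = expSpectrumQ μ A := by
  ext l
  simp only [muSpectrum, expSpectrumQ, Set.mem_setOf_eq]
  rw [not_iff_not]
  constructor
  · exact SpecAux.forward_dir hμ hθ hμr A l
  · exact SpecAux.backward_dir hμ hθ hμr A hK ha hfwd hbwd l

end
end

section
/- Let μ be a discrete growth rate with μ_{n+1}/μ_n ≤ θ for all n and some θ ≥ 1, let {A_n}_{n≥1} be invertible bounded operators on a Banach space X, and let {‖·‖_k}_{k≥1} be norms equivalent to ‖·‖ satisfying ‖A_n^{−1}x‖_n ≤ K(μ_{n+1}/μ_n)^a ‖x‖_{n+1} for some K, a > 0 (this follows from the backward growth bound ‖Φ_A(m,k)x‖_m ≤ K(μ_k/μ_m)^a ‖x‖_k for m ≤ k). Let g_n : X → X satisfy ‖g_n(x)−g_n(y)‖_{n+1} ≤ c (μ'_n/μ_n) ‖x−y‖_n for all n ≥ 1 and x, y ∈ X, where μ'_n = μ_{n+1}−μ_n. If cKθ^{a+1} < 1, then for every n ≥ 1 the map x ↦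 A_n x + g_n(x) is a bijection of X (with continuous inverse), i.e., a homeomorphism of X. -/
noncomputable section

open Filter Metric Set Topology

variable {X : Type*} [NormedAddCommGroup X] [NormedSpace ℝ X]

set_option maxHeartbeats 1000000

/-- `A_n + g_n` is a homeomorphism of `X` when `c K θ^{a+1} < 1`. -/
theorem perturbed_map_is_homeomorphism [CompleteSpace X]
    (μ : ℕ → ℝ) (hμ : IsGrowthRate μ) (θ : ℝ) (hθ : 1 ≤ θ)
    (hμr : ∀ n, μ (n + 1) / μ n ≤ θ)
    (A : ℕ → X ≃L[ℝ] X) (Nrm : ℕ → X → ℝ) (hNrm : IsNormFamily Nrm)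
    (hEq : NormsEquivalent Nrm)
    (K a : ℝ) (hK : 0 < K) (ha : 0 < a)
    (hinv : ∀ n, 1 ≤ n → ∀ x : X,
      Nrm n ((A n).symm x) ≤ K * (μ (n + 1) / μ n) ^ a * Nrm (n + 1) x)
    (g : ℕ → X → X) (c : ℝ) (hc : 0 < c)
    (hlip : ∀ n, 1 ≤ n → ∀ x y : X,
      Nrm (n + 1) (g n x - g n y) ≤ c * ((μ (n + 1) - μ n) / μ n) * Nrm n (x - y))
    (hsmall : c * K * θ ^ (a + 1) < 1) :
    ∀ n, 1 ≤ n → IsHomeoOf (pert A g n) := by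
  intro n hn
  -- basic positivity facts about μ
  have hθpos : (0:ℝ) < θ := lt_of_lt_of_le one_pos hθ
  have hμpos : ∀ k, (0:ℝ) < μ k := fun k =>
    lt_of_lt_of_le one_pos (by simpa [hμ.2.1] using hμ.1.monotone (Nat.zero_le k))
  set r : ℝ := μ (n + 1) / μ n with hrdef
  have hrpos : 0 < r := div_pos (hμpos _) (hμpos _)
  have hr1 : 1 < r := (one_lt_div (hμpos n)).2 (hμ.1 (Nat.lt_succ_self n))
  have hrθ : r ≤ θ := hμr n
  have hra : r ^ a ≤ θ ^ a := Real.rpow_le_rpow hrpos.le hrθ ha.le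
  have hrapos : 0 < r ^ a := Real.rpow_pos_of_pos hrpos a
  have hθapos : 0 < θ ^ a := Real.rpow_pos_of_pos hθpos a
  have hd : (μ (n + 1) - μ n) / μ n = r - 1 := by
    rw [hrdef, sub_div, div_self (hμpos n).ne']
  -- the contraction constant
  set L : ℝ := c * K * θ ^ a * (θ - 1) with hLdef
  have hL0 : 0 ≤ L := mul_nonneg (by positivity) (sub_nonneg.2 hθ)
  have hL1 : L < 1 := by
    have hθa1 : θ ^ (a + 1) = θ ^ a * θ := Real.rpow_add_one hθpos.ne' a
    nlinarith [mul_pos hc hK, hθapos]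
  -- properties of the norms
  obtain ⟨α, β, hα, hβ, hab⟩ := hEq n
  obtain ⟨α', β', hα', hβ', hab'⟩ := hEq (n + 1)
  have hNneg : ∀ k (x : X), 0 ≤ Nrm k x := by
    intro k x
    obtain ⟨a₁, b₁, ha₁, hb₁, h₁⟩ := hEq k
    exact le_trans (by positivity) (h₁ x).1
  have hNsymm : ∀ k (x y : X), Nrm k (x - y) = Nrm k (y - x) := by
    intro k x y
    have := (hNrm k).2.1 (-1) (y - x)
    simpa [neg_sub] using this
  -- the key contraction estimate in the norm `Nrm n`
  have hcontr : ∀ x y : X,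
      Nrm n ((A n).symm (g n x) - (A n).symm (g n y)) ≤ L * Nrm n (x - y) := by
    intro x y
    rw [← map_sub]
    calc Nrm n ((A n).symm (g n x - g n y))
        ≤ K * r ^ a * Nrm (n + 1) (g n x - g n y) := hinv n hn _
      _ ≤ K * r ^ a * (c * ((μ (n + 1) - μ n) / μ n) * Nrm n (x - y)) := by
          apply mul_le_mul_of_nonneg_left (hlip n hn x y) (by positivity)
      _ ≤ L * Nrm n (x - y) := by
          rw [hd]
          have hN := hNneg n (x - y)
          have h1 : K * r ^ a * (c * (r - 1)) ≤ L := by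
            rw [hLdef]
            nlinarith [mul_pos hc hK,
              mul_le_mul hra (sub_le_sub_right hrθ 1) (sub_nonneg.2 hr1.le) hθapos.le]
          nlinarith [mul_nonneg (mul_nonneg hK.le hrapos.le) (mul_nonneg hc.le (sub_nonneg.2 hr1.le))]
  -- the auxiliary maps whose fixed points invert `pert A g n`
  set T : X → X → X := fun y x => (A n).symm (y - g n x) with hTdef
  have hTsub : ∀ y x x', T y x - T y x' = (A n).symm (g n x') - (A n).symm (g n x) := by
    intro y x x'
    simp only [hTdef, ← map_sub]
    congr 1
    abel
  have hTcontr : ∀ y x x', Nrm n (T y x - T y x') ≤ L * Nrm n (x - x') := by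
    intro y x x'
    rw [hTsub, hNsymm n x x']
    exact hcontr x' x
  -- iterates satisfy a geometric estimate
  have hTiter : ∀ (y : X) (m : ℕ) (x x' : X),
      Nrm n ((T y)^[m] x - (T y)^[m] x') ≤ L ^ m * Nrm n (x - x') := by
    intro y m
    induction m with
    | zero => intro x x'; simp
    | succ m ih =>
      intro x x'
      rw [Function.iterate_succ_apply', Function.iterate_succ_apply']
      calc Nrm n (T y ((T y)^[m] x) - T y ((T y)^[m] x'))
          ≤ L * Nrm n ((T y)^[m] x - (T y)^[m] x') := hTcontr y _ _
        _ ≤ L * (L ^ m * Nrm n (x - x')) := mul_le_mul_of_nonneg_left (ih x x') hL0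
        _ = L ^ (m + 1) * Nrm n (x - x') := by ring
  -- choose an iterate which is a contraction in the ambient norm
  have hLm : ∃ m : ℕ, β / α * L ^ m < 1 := by
    have : Tendsto (fun m : ℕ => β / α * L ^ m) atTop (𝓝 (β / α * 0)) :=
      (tendsto_pow_atTop_nhds_zero_of_lt_one hL0 hL1).const_mul _
    rw [mul_zero] at this
    exact (this.eventually_lt_const one_pos).exists
  obtain ⟨m, hm⟩ := hLm
  have hCnn : 0 ≤ β / α * L ^ m := by positivity
  set C : NNReal := ⟨β / α * L ^ m, hCnn⟩ with hCdef
  have hClt : C < 1 := by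
    rw [← NNReal.coe_lt_coe]; exact_mod_cast hm
  have hTlip : ∀ y : X, LipschitzWith C ((T y)^[m]) := by
    intro y
    apply LipschitzWith.of_dist_le_mul
    intro x x'
    rw [dist_eq_norm, dist_eq_norm]
    have h1 : α * ‖(T y)^[m] x - (T y)^[m] x'‖ ≤ Nrm n ((T y)^[m] x - (T y)^[m] x') :=
      (hab _).1
    have h2 := hTiter y m x x'
    have h3 : Nrm n (x - x') ≤ β * ‖x - x'‖ := (hab _).2
    have h4 : L ^ m * Nrm n (x - x') ≤ L ^ m * (β * ‖x - x'‖) :=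
      mul_le_mul_of_nonneg_left h3 (by positivity)
    have h5 : α * ‖(T y)^[m] x - (T y)^[m] x'‖ ≤ L ^ m * (β * ‖x - x'‖) := by linarith
    show ‖(T y)^[m] x - (T y)^[m] x'‖ ≤ β / α * L ^ m * ‖x - x'‖
    rw [div_mul_eq_mul_div, div_mul_eq_mul_div, le_div_iff₀ hα]
    nlinarith
  have hTcontracting : ∀ y : X, ContractingWith C ((T y)^[m]) :=
    fun y => ⟨hClt, hTlip y⟩
  -- fixed points of `T y` are exactly preimages of `y` under `pert A g n`
  have hfixed_iff : ∀ y x : X, T y x = x ↔ pert A g n x = y := by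
    intro y x
    simp only [hTdef, pert]
    constructor
    · intro h
      have := congrArg (A n) h
      rw [ContinuousLinearEquiv.apply_symm_apply] at this
      rw [← this]; abel
    · intro h
      have : y - g n x = A n x := by rw [← h]; abel
      rw [this, ContinuousLinearEquiv.symm_apply_apply]
  -- existence and uniqueness of preimages
  have hbij : ∀ y : X, ∃! x : X, pert A g n x = y := by
    intro y
    have hfp : Function.IsFixedPt (T y) ((hTcontracting y).fixedPoint ((T y)^[m])) :=
      ContractingWith.isFixedPt_fixedPoint_iterate (hTcontracting y)
    refine ⟨_, (hfixed_iff y _).1 hfp, ?_⟩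
    intro x hx
    have hx' : T y x = x := (hfixed_iff y x).2 hx
    have hfp' : T y ((hTcontracting y).fixedPoint ((T y)^[m])) =
        (hTcontracting y).fixedPoint ((T y)^[m]) := hfp
    have h1 := hTcontr y x ((hTcontracting y).fixedPoint ((T y)^[m]))
    rw [hx', hfp'] at h1
    have h2 := hNneg n (x - (hTcontracting y).fixedPoint ((T y)^[m]))
    have h3 : Nrm n (x - (hTcontracting y).fixedPoint ((T y)^[m])) = 0 :=
      le_antisymm (by nlinarith) h2
    have h4 := (hNrm n).2.2 _ h3
    exact sub_eq_zero.1 h4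
  -- build the inverse map
  choose G hG hGu using hbij
  have hGl : ∀ x, G (pert A g n x) = x := fun x => (hGu _ x rfl).symm
  -- Lipschitz estimate for `G` in `Nrm n`
  have hGlip : ∀ y₁ y₂ : X, Nrm n (G y₁ - G y₂) ≤
      (1 - L)⁻¹ * (K * r ^ a * Nrm (n + 1) (y₁ - y₂)) := by
    intro y₁ y₂
    have h₁ : T y₁ (G y₁) = G y₁ := (hfixed_iff y₁ _).2 (hG y₁)
    have h₂ : T y₂ (G y₂) = G y₂ := (hfixed_iff y₂ _).2 (hG y₂)
    have heq : G y₁ - G y₂ =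
        (A n).symm (y₁ - y₂) + (T y₂ (G y₁) - T y₂ (G y₂)) := by
      conv_lhs => rw [← h₁, ← h₂]
      simp only [hTdef, ← map_sub, ← map_add]
      congr 1
      abel
    have htri := (hNrm n).1 ((A n).symm (y₁ - y₂)) (T y₂ (G y₁) - T y₂ (G y₂))
    rw [← heq] at htri
    have h3 := hTcontr y₂ (G y₁) (G y₂)
    have h4 := hinv n hn (y₁ - y₂)
    have h5 : Nrm n (G y₁ - G y₂) ≤ K * r ^ a * Nrm (n + 1) (y₁ - y₂)
        + L * Nrm n (G y₁ - G y₂) := by linarith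
    have h6 : (1 - L) * Nrm n (G y₁ - G y₂) ≤ K * r ^ a * Nrm (n + 1) (y₁ - y₂) := by
      nlinarith
    have h1L : 0 < 1 - L := by linarith
    rw [inv_mul_eq_div, le_div_iff₀ h1L]
    nlinarith [h6]
  -- `G` is Lipschitz for the ambient norm, hence continuous
  have h1L : 0 < 1 - L := by linarith
  have hGcont : Continuous G := by
    have hconst : 0 ≤ (1 - L)⁻¹ * (K * r ^ a * β') / α :=
      div_nonneg (mul_nonneg (inv_nonneg.2 h1L.le)
        (mul_nonneg (mul_nonneg hK.le hrapos.le) hβ'.le)) hα.le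
    apply LipschitzWith.continuous (K := ⟨_, hconst⟩)
    apply LipschitzWith.of_dist_le_mul
    intro y₁ y₂
    rw [dist_eq_norm, dist_eq_norm]
    have h1 : α * ‖G y₁ - G y₂‖ ≤ Nrm n (G y₁ - G y₂) := (hab _).1
    have h2 := hGlip y₁ y₂
    have h3 : Nrm (n + 1) (y₁ - y₂) ≤ β' * ‖y₁ - y₂‖ := (hab' _).2
    have h4 : (1 - L)⁻¹ * (K * r ^ a * Nrm (n + 1) (y₁ - y₂)) ≤
        (1 - L)⁻¹ * (K * r ^ a * (β' * ‖y₁ - y₂‖)) := by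
      apply mul_le_mul_of_nonneg_left _ (inv_nonneg.2 h1L.le)
      exact mul_le_mul_of_nonneg_left h3 (by positivity)
    show ‖G y₁ - G y₂‖ ≤ (1 - L)⁻¹ * (K * r ^ a * β') / α * ‖y₁ - y₂‖
    rw [div_mul_eq_mul_div, le_div_iff₀ hα]
    nlinarith [norm_nonneg (y₁ - y₂), mul_nonneg (mul_nonneg hK.le hrapos.le) hβ'.le,
      inv_nonneg.2 h1L.le]
  -- `pert A g n` is continuous
  have hpcont : Continuous (pert A g n) := by
    have hμ'nn : 0 ≤ (μ (n + 1) - μ n) / μ n := by rw [hd]; linarith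
    have hcd : 0 ≤ c * ((μ (n + 1) - μ n) / μ n) := mul_nonneg hc.le hμ'nn
    have hv : 0 ≤ c * ((μ (n + 1) - μ n) / μ n) * β / α' :=
      div_nonneg (mul_nonneg hcd hβ.le) hα'.le
    have hgl : LipschitzWith ⟨_, hv⟩ (g n) := by
      apply LipschitzWith.of_dist_le_mul
      intro x y
      rw [dist_eq_norm, dist_eq_norm]
      have h1 : α' * ‖g n x - g n y‖ ≤ Nrm (n + 1) (g n x - g n y) := (hab' _).1
      have h2 := hlip n hn x y
      have h3 : Nrm n (x - y) ≤ β * ‖x - y‖ := (hab _).2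
      show ‖g n x - g n y‖ ≤ c * ((μ (n + 1) - μ n) / μ n) * β / α' * ‖x - y‖
      rw [div_mul_eq_mul_div, le_div_iff₀ hα']
      nlinarith [mul_le_mul_of_nonneg_left h3 hcd]
    exact Continuous.add (A n).continuous hgl.continuous
  -- assemble the homeomorphism
  refine ⟨⟨⟨pert A g n, G, hGl, hG⟩, hpcont, hGcont⟩, fun x => rfl⟩


end
end

section
/- Let μ be a discrete growth rate with μ_{n+1}/μ_n ≤ θ for all n and some θ ≥ 1, {A_n}_{n≥1} invertible bounded operators on a Banach space X, and {‖·‖_k} norms equivalent to ‖·‖ satisfying the forward growth bound ‖Φ_A(m,k)x‖_m ≤ K(μ_m/μ_k)^a ‖x‖_k for m ≥ k and some K, a > 0. Let g_n : X → X satisfy ‖g_n(x)−g_n(y)‖_{n+1} ≤ c(μ'_n/μ_n)‖x−y‖_n for all n, x, y, where μ'_n = μ_{n+1}−μ_n, and assume each A_n + g_n is a homeomorphism of X. Then the nonlinear evolution 𝒢 satisfies ‖𝒢(m,n)(x)−𝒢(m,n)(y)‖_m ≤ K (μ_m/μ_n)^{a+cKθ} ‖x−y‖_n for all m ≥ n ≥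 1 and x, y ∈ X. -/
noncomputable section

open Filter Metric Set Topology

variable {X : Type*} [NormedAddCommGroup X] [NormedSpace ℝ X]

lemma evolE_self_aux (A : ℕ → X ≃L[ℝ] X) (m : ℕ) (z : X) : evolE A m m z = z := by
  unfold evolE evolEquiv
  rw [if_pos le_rfl, Nat.sub_self]
  rfl

lemma evolE_succ_aux (A : ℕ → X ≃L[ℝ] X) {m k : ℕ} (h : k ≤ m) (z : X) :
    evolE A (m + 1) k z = A m (evolE A m k z) := by
  unfold evolE evolEquiv
  rw [if_pos (h.trans (Nat.le_succ m)), if_pos h]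
  have h1 : m + 1 - k = (m - k) + 1 := by omega
  rw [h1]
  show ((evolFwdE A k (m - k)).trans (A (k + (m - k)))) z = _
  rw [Nat.add_sub_cancel' h]
  rfl

lemma nlEvol_self_aux (A : ℕ → X ≃L[ℝ] X) (g : ℕ → X → X) (n : ℕ) (z : X) :
    nlEvol A g n n z = z := by
  unfold nlEvol
  rw [Nat.sub_self]
  rfl

lemma nlEvol_succ_aux (A : ℕ → X ≃L[ℝ] X) (g : ℕ → X → X) {m n : ℕ} (h : n ≤ m) (z : X) :
    nlEvol A g (m + 1) n z = pert A g m (nlEvol A g m n z) := by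
  unfold nlEvol
  have h1 : m + 1 - n = (m - n) + 1 := by omega
  rw [h1]
  show (pert A g (n + (m - n)) ∘ nlFwd (pert A g) n (m - n)) z = _
  rw [Nat.add_sub_cancel' h]
  rfl

/-- forward Lipschitz estimate for the nonlinear evolution `𝒢`. -/
theorem nlEvol_forward_lipschitz [CompleteSpace X]
    (μ : ℕ → ℝ) (hμ : IsGrowthRate μ) (θ : ℝ) (hθ : 1 ≤ θ)
    (hμr : ∀ n, μ (n + 1) / μ n ≤ θ)
    (A : ℕ → X ≃L[ℝ] X) (Nrm : ℕ → X → ℝ) (hNrm : IsNormFamily Nrm)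
    (hEq : NormsEquivalent Nrm)
    (K a : ℝ) (hK : 0 < K) (ha : 0 < a)
    (hfwd : ∀ k m : ℕ, 1 ≤ k → k ≤ m → ∀ x : X,
      Nrm m (evolE A m k x) ≤ K * (μ m / μ k) ^ a * Nrm k x)
    (g : ℕ → X → X) (c : ℝ) (hc : 0 < c)
    (hlip : ∀ n, 1 ≤ n → ∀ x y : X,
      Nrm (n + 1) (g n x - g n y) ≤ c * ((μ (n + 1) - μ n) / μ n) * Nrm n (x - y))
    (hhom : ∀ n, 1 ≤ n → IsHomeoOf (pert A g n)) :
    ∀ m n : ℕ, 1 ≤ n → n ≤ m → ∀ x y : X,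
      Nrm m (nlEvol A g m n x - nlEvol A g m n y) ≤
        K * (μ m / μ n) ^ (a + c * K * θ) * Nrm n (x - y) := by
  -- basic facts about μ
  have h1le : ∀ k, (1 : ℝ) ≤ μ k := fun k => hμ.2.1 ▸ hμ.1.monotone (Nat.zero_le k)
  have hpos : ∀ k, (0 : ℝ) < μ k := fun k => lt_of_lt_of_le one_pos (h1le k)
  have hmono : ∀ {j k : ℕ}, j ≤ k → μ j ≤ μ k := fun h => hμ.1.monotone h
  -- basic facts about the norm family
  have hN0 : ∀ k, Nrm k (0 : X) = 0 := by
    intro k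
    have := (hNrm k).2.1 0 0
    simpa using this
  have hNneg : ∀ k (z : X), Nrm k (-z) = Nrm k z := by
    intro k z
    have := (hNrm k).2.1 (-1) z
    simpa using this
  have hNnonneg : ∀ k (z : X), 0 ≤ Nrm k z := by
    intro k z
    have h2 : Nrm k (z + (-z)) ≤ Nrm k z + Nrm k (-z) := (hNrm k).1 z (-z)
    rw [add_neg_cancel, hN0, hNneg] at h2
    linarith
  intro m n hn hnm x y
  set Δ := Nrm n (x - y) with hΔ
  have hΔnonneg : 0 ≤ Δ := hNnonneg n _
  set D : ℕ → X := fun j => nlEvol A g j n x - nlEvol A g j n y with hD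
  set L : ℕ → X := fun j => g j (nlEvol A g j n x) - g j (nlEvol A g j n y) with hL
  set ρ : ℕ → ℝ := fun j => Nrm j (D j) with hρ
  have hdivpos : ∀ j k : ℕ, (0:ℝ) < μ j / μ k := fun j k => div_pos (hpos j) (hpos k)
  have hμ'nn : ∀ j : ℕ, 0 ≤ (μ (j + 1) - μ j) / μ j := fun j =>
    div_nonneg (sub_nonneg.mpr (hmono (Nat.le_succ j))) (hpos j).le
  set aj : ℕ → ℝ := fun j => c * K * ((μ (j + 1) - μ j) / μ j) with haj
  have hajnn : ∀ j, 0 ≤ aj j := fun j =>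
    mul_nonneg (mul_nonneg hc.le hK.le) (hμ'nn j)
  set P : ℕ → ℝ := fun k => ∏ j ∈ Finset.Ico n k, (1 + aj j) with hP
  have hPnn : ∀ k, 0 ≤ P k := by
    intro k
    apply Finset.prod_nonneg
    intro j _
    have := hajnn j
    linarith
  -- Key variation-of-constants identity
  have key : ∀ m', n ≤ m' →
      D m' = evolE A m' n (x - y) + ∑ j ∈ Finset.Ico n m', evolE A m' (j + 1) (L j) := by
    intro m' hm'
    induction m', hm' using Nat.le_induction with
    | base =>
      simp only [hD, nlEvol_self_aux, Finset.Ico_self, Finset.sum_empty, add_zero,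
        evolE_self_aux]
    | succ k hk ih =>
      have hDk : D (k + 1) = A k (D k) + L k := by
        simp only [hD, hL, nlEvol_succ_aux A g hk, pert, map_sub]
        abel
      rw [hDk, ih, map_add, map_sum]
      rw [Finset.sum_Ico_succ_top hk]
      have e1 : (A k) (evolE A k n (x - y)) = evolE A (k + 1) n (x - y) :=
        (evolE_succ_aux A hk (x - y)).symm
      have e2 : ∀ j ∈ Finset.Ico n k, (A k) (evolE A k (j + 1) (L j)) =
          evolE A (k + 1) (j + 1) (L j) := by
        intro j hj
        exact (evolE_succ_aux A (Nat.succ_le_of_lt (Finset.mem_Ico.mp hj).2) (L j)).symm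
      rw [e1, Finset.sum_congr rfl e2, evolE_self_aux]
      abel
  -- Scalar integral inequality
  have step : ∀ m', n ≤ m' → ρ m' ≤ K * (μ m' / μ n) ^ a * Δ +
      ∑ j ∈ Finset.Ico n m',
        K * (μ m' / μ j) ^ a * (c * ((μ (j + 1) - μ j) / μ j)) * ρ j := by
    intro m' hm'
    have hid := key m' hm'
    calc ρ m' = Nrm m' (evolE A m' n (x - y) + ∑ j ∈ Finset.Ico n m', evolE A m' (j + 1) (L j)) := by
          show Nrm m' (D m') = _; rw [hid]
      _ ≤ Nrm m' (evolE A m' n (x - y)) +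
          Nrm m' (∑ j ∈ Finset.Ico n m', evolE A m' (j + 1) (L j)) := (hNrm m').1 _ _
      _ ≤ Nrm m' (evolE A m' n (x - y)) +
          ∑ j ∈ Finset.Ico n m', Nrm m' (evolE A m' (j + 1) (L j)) := by
          gcongr
          exact Finset.le_sum_of_subadditive (Nrm m') (hN0 m').le ((hNrm m').1) _ _
      _ ≤ K * (μ m' / μ n) ^ a * Δ +
          ∑ j ∈ Finset.Ico n m',
            K * (μ m' / μ j) ^ a * (c * ((μ (j + 1) - μ j) / μ j)) * ρ j := by
          gcongr with j hj
          · exact hfwd n m' hn hm' (x - y)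
          · obtain ⟨hj1, hj2⟩ := Finset.mem_Ico.mp hj
            have hjn : 1 ≤ j := le_trans hn hj1
            have t1 : Nrm m' (evolE A m' (j + 1) (L j)) ≤
                K * (μ m' / μ (j + 1)) ^ a * Nrm (j + 1) (L j) :=
              hfwd (j + 1) m' (Nat.succ_le_succ (Nat.zero_le j)) (Nat.succ_le_of_lt hj2) _
            have t2 : Nrm (j + 1) (L j) ≤ c * ((μ (j + 1) - μ j) / μ j) * ρ j :=
              hlip j hjn _ _
            have t3 : (μ m' / μ (j + 1)) ^ a ≤ (μ m' / μ j) ^ a := by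
              apply Real.rpow_le_rpow (hdivpos m' (j + 1)).le
              · exact div_le_div_of_nonneg_left (hpos m').le (hpos j) (hmono (Nat.le_succ j))
              · exact ha.le
            calc Nrm m' (evolE A m' (j + 1) (L j)) ≤
                K * (μ m' / μ (j + 1)) ^ a * Nrm (j + 1) (L j) := t1
              _ ≤ K * (μ m' / μ j) ^ a * (c * ((μ (j + 1) - μ j) / μ j) * ρ j) := by
                  apply mul_le_mul
                  · apply mul_le_mul_of_nonneg_left t3 hK.le
                  · exact t2
                  · exact hNnonneg _ _
                  · exact mul_nonneg hK.le (Real.rpow_nonneg (hdivpos m' j).le a)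
              _ = K * (μ m' / μ j) ^ a * (c * ((μ (j + 1) - μ j) / μ j)) * ρ j := by ring
  -- Telescoping identity for P
  have Pid : ∀ m', n ≤ m' → P m' = 1 + ∑ j ∈ Finset.Ico n m', aj j * P j := by
    intro m' hm'
    induction m', hm' using Nat.le_induction with
    | base => simp [hP]
    | succ k hk ih =>
      have h1 : P (k + 1) = P k * (1 + aj k) := Finset.prod_Ico_succ_top hk _
      have h2 : ∑ j ∈ Finset.Ico n (k + 1), aj j * P j =
          (∑ j ∈ Finset.Ico n k, aj j * P j) + aj k * P k := Finset.sum_Ico_succ_top hk _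
      rw [h1, h2, ih]
      ring
  -- Gronwall
  have gron : ∀ m', n ≤ m' → ρ m' ≤ K * (μ m' / μ n) ^ a * Δ * P m' := by
    intro m'
    induction m' using Nat.strong_induction_on with
    | _ m' ih =>
      intro hm'
      have hmul : ∀ j, n ≤ j → (μ m' / μ j) ^ a * (μ j / μ n) ^ a = (μ m' / μ n) ^ a := by
        intro j hj
        rw [← Real.mul_rpow (hdivpos m' j).le (hdivpos j n).le]
        congr 1
        have hj0 : μ j ≠ 0 := (hpos j).ne'
        have hn0 : μ n ≠ 0 := (hpos n).ne'
        field_simp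
      calc ρ m' ≤ K * (μ m' / μ n) ^ a * Δ +
            ∑ j ∈ Finset.Ico n m',
              K * (μ m' / μ j) ^ a * (c * ((μ (j + 1) - μ j) / μ j)) * ρ j := step m' hm'
        _ ≤ K * (μ m' / μ n) ^ a * Δ +
            ∑ j ∈ Finset.Ico n m', K * (μ m' / μ n) ^ a * Δ * (aj j * P j) := by
            refine add_le_add le_rfl (Finset.sum_le_sum ?_)
            intro j hj
            obtain ⟨hj1, hj2⟩ := Finset.mem_Ico.mp hj
            have hρj := ih j hj2 hj1
            calc K * (μ m' / μ j) ^ a * (c * ((μ (j + 1) - μ j) / μ j)) * ρ j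
                ≤ K * (μ m' / μ j) ^ a * (c * ((μ (j + 1) - μ j) / μ j)) *
                  (K * (μ j / μ n) ^ a * Δ * P j) := by
                  apply mul_le_mul_of_nonneg_left hρj
                  exact mul_nonneg (mul_nonneg hK.le (Real.rpow_nonneg (hdivpos m' j).le a))
                    (mul_nonneg hc.le (hμ'nn j))
              _ = K * ((μ m' / μ j) ^ a * (μ j / μ n) ^ a) * Δ * (aj j * P j) := by
                  rw [haj]; ring
              _ = K * (μ m' / μ n) ^ a * Δ * (aj j * P j) := by rw [hmul j hj1]
        _ = K * (μ m' / μ n) ^ a * Δ * (1 + ∑ j ∈ Finset.Ico n m', aj j * P j) := by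
            rw [mul_add, mul_one, Finset.mul_sum]
        _ = K * (μ m' / μ n) ^ a * Δ * P m' := by rw [← Pid m' hm']
  -- Bound on P
  have Pbound : P m ≤ (μ m / μ n) ^ (c * K * θ) := by
    have hsum : ∑ j ∈ Finset.Ico n m, (μ (j + 1) - μ j) / μ j ≤
        θ * (Real.log (μ m) - Real.log (μ n)) := by
      have tele : ∑ j ∈ Finset.Ico n m, (Real.log (μ (j + 1)) - Real.log (μ j)) =
          Real.log (μ m) - Real.log (μ n) := by
        rw [Finset.sum_Ico_eq_sub _ hnm, Finset.sum_range_sub (fun k => Real.log (μ k)),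
          Finset.sum_range_sub (fun k => Real.log (μ k))]
        ring
      rw [← tele, Finset.mul_sum]
      apply Finset.sum_le_sum
      intro j _
      set r := μ (j + 1) / μ j with hr
      have hr1 : 1 ≤ r := (one_le_div (hpos j)).mpr (hmono (Nat.le_succ j))
      have hrθ : r ≤ θ := hμr j
      have hrpos : 0 < r := lt_of_lt_of_le one_pos hr1
      have hlogr : Real.log (μ (j + 1)) - Real.log (μ j) = Real.log r := by
        rw [hr, Real.log_div (hpos (j + 1)).ne' (hpos j).ne']
      have h2 : (μ (j + 1) - μ j) / μ j = r - 1 := by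
        have hj0 : μ j ≠ 0 := (hpos j).ne'
        rw [hr]
        field_simp
      rw [hlogr, h2]
      -- r - 1 ≤ θ * log r
      have hlog_ge : 1 - 1 / r ≤ Real.log r := by
        have := Real.add_one_le_exp (-Real.log r)
        rw [Real.exp_neg, Real.exp_log hrpos] at this
        have h1r : 1 / r = r⁻¹ := one_div r
        linarith
      have hlognn : 0 ≤ Real.log r := Real.log_nonneg hr1
      have hrne : r ≠ 0 := hrpos.ne'
      have : r - 1 = r * (1 - 1 / r) := by field_simp
      rw [this]
      calc r * (1 - 1 / r) ≤ r * Real.log r := by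
            apply mul_le_mul_of_nonneg_left hlog_ge hrpos.le
        _ ≤ θ * Real.log r := mul_le_mul_of_nonneg_right hrθ hlognn
    calc P m ≤ ∏ j ∈ Finset.Ico n m, Real.exp (aj j) := by
          apply Finset.prod_le_prod
          · intro j _; have := hajnn j; linarith
          · intro j _
            have := Real.add_one_le_exp (aj j)
            linarith
      _ = Real.exp (∑ j ∈ Finset.Ico n m, aj j) := (Real.exp_sum _ _).symm
      _ ≤ Real.exp (c * K * θ * (Real.log (μ m) - Real.log (μ n))) := by
          apply Real.exp_le_exp.mpr
          have : ∑ j ∈ Finset.Ico n m, aj j =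
              c * K * ∑ j ∈ Finset.Ico n m, (μ (j + 1) - μ j) / μ j := by
            rw [haj, Finset.mul_sum]
          rw [this]
          have hcK : 0 ≤ c * K := by positivity
          calc c * K * ∑ j ∈ Finset.Ico n m, (μ (j + 1) - μ j) / μ j
              ≤ c * K * (θ * (Real.log (μ m) - Real.log (μ n))) :=
                mul_le_mul_of_nonneg_left hsum hcK
            _ = c * K * θ * (Real.log (μ m) - Real.log (μ n)) := by ring
      _ = (μ m / μ n) ^ (c * K * θ) := by
          rw [Real.rpow_def_of_pos (hdivpos m n),
            Real.log_div (hpos m).ne' (hpos n).ne']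
          ring_nf
  -- Conclude
  have final := gron m hnm
  have hcomb : (μ m / μ n) ^ a * (μ m / μ n) ^ (c * K * θ) = (μ m / μ n) ^ (a + c * K * θ) := by
    rw [← Real.rpow_add (hdivpos m n)]
  calc Nrm m (nlEvol A g m n x - nlEvol A g m n y) = ρ m := rfl
    _ ≤ K * (μ m / μ n) ^ a * Δ * P m := final
    _ ≤ K * (μ m / μ n) ^ a * Δ * (μ m / μ n) ^ (c * K * θ) := by
        apply mul_le_mul_of_nonneg_left Pbound
        exact mul_nonneg (mul_nonneg hK.le (Real.rpow_nonneg (hdivpos m n).le a)) hΔnonneg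
    _ = K * ((μ m / μ n) ^ a * (μ m / μ n) ^ (c * K * θ)) * Δ := by ring
    _ = K * (μ m / μ n) ^ (a + c * K * θ) * Nrm n (x - y) := by rw [hcomb]

end
end

section
/- Let μ be a discrete growth rate with μ_{n+1}/μ_n ≤ θ for all n and some θ ≥ 1, {A_n}_{n≥1} invertible bounded operators on a Banach space X, and {‖·‖_k} norms equivalent to ‖·‖ with forward growth bound ‖Φ_A(m,k)x‖_m ≤ K(μ_m/μ_k)^a ‖x‖_k for m ≥ k. Let g_n : X → X satisfy ‖g_n(x)‖_{n+1} ≤ M(μ'_n/μ_n) for all n and x, and assume each A_n+g_n is a homeomorphism. Set η_n = e^n and define f_n(x) := ∑_{j=⌊μ̃⁻¹(η_{n−1})⌋+1}^{⌊μ̃⁻¹(η_n)⌋} Φ_A(⌊μ̃⁻¹(η_n)⌋+1, j+1) g_j(𝒢(j, ⌊μ̃⁻¹(η_{n−1})⌋+1)(x)). Then there exists C₁ > 0 (one may take C₁ = KMθ(3θ²)^a log(3θ²)) such that ‖f_n(x)‖_{⌊μ̃⁻¹(η_n)⌋+1} ≤ C₁ for all n ≥ 1 and all x ∈ X. -/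
noncomputable section

open Filter Metric Set Topology

variable {X : Type*} [NormedAddCommGroup X] [NormedSpace ℝ X]

section Aux

variable {μ : ℕ → ℝ}

lemma growth_pos (hμ : IsGrowthRate μ) (k : ℕ) : 0 < μ k := by
  have h := hμ.1.monotone (Nat.zero_le k)
  have := hμ.2.1
  linarith

lemma floorInv_bddAbove (hμ : IsGrowthRate μ) (t : ℝ) : BddAbove {n : ℕ | μ n ≤ t} := by
  obtain ⟨N, hN⟩ := Filter.eventually_atTop.mp (hμ.2.2.eventually_gt_atTop t)
  refine ⟨N, fun s hs => ?_⟩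
  by_contra h
  exact absurd hs (not_le.mpr (hN s (le_of_not_ge h)))

lemma floorInv_le (hμ : IsGrowthRate μ) {t : ℝ} (ht : 1 ≤ t) : μ (floorInvTilde μ t) ≤ t := by
  have h0 : 0 ∈ {n : ℕ | μ n ≤ t} := by simp [hμ.2.1, ht]
  exact Nat.sSup_mem ⟨0, h0⟩ (floorInv_bddAbove hμ t)

lemma lt_floorInv_succ (hμ : IsGrowthRate μ) {t : ℝ} (ht : 1 ≤ t) :
    t < μ (floorInvTilde μ t + 1) := by
  by_contra h
  push_neg at h
  have : floorInvTilde μ t + 1 ≤ floorInvTilde μ t :=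
    le_csSup (floorInv_bddAbove hμ t) h
  omega

lemma floorInv_mono (hμ : IsGrowthRate μ) {s t : ℝ} (hs : 1 ≤ s) (hst : s ≤ t) :
    floorInvTilde μ s ≤ floorInvTilde μ t :=
  le_csSup (floorInv_bddAbove hμ t) (le_trans (floorInv_le hμ hs) hst)

lemma nrm_zero {Nrm : ℕ → X → ℝ} (h : IsNormFamily Nrm) (k : ℕ) : Nrm k 0 = 0 := by
  have := (h k).2.1 0 (0 : X)
  simpa using this

lemma nrm_sum_le {Nrm : ℕ → X → ℝ} (h : IsNormFamily Nrm) (k : ℕ) {ι : Type*}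
    (s : Finset ι) (f : ι → X) : Nrm k (∑ i ∈ s, f i) ≤ ∑ i ∈ s, Nrm k (f i) := by
  induction s using Finset.cons_induction with
  | empty => simp [nrm_zero h k]
  | cons i s hi ih =>
    rw [Finset.sum_cons, Finset.sum_cons]
    exact le_trans ((h k).1 _ _) (by linarith)

lemma sub_one_le_mul_log {x θ : ℝ} (hx : 1 ≤ x) (hθ : x ≤ θ) : x - 1 ≤ θ * Real.log x := by
  have hx0 : 0 < x := lt_of_lt_of_le one_pos hx
  have h1 : Real.log x⁻¹ ≤ x⁻¹ - 1 := Real.log_le_sub_one_of_pos (inv_pos.mpr hx0)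
  rw [Real.log_inv] at h1
  have h2 : 1 - x⁻¹ ≤ Real.log x := by linarith
  have hlog : 0 ≤ Real.log x := Real.log_nonneg hx
  have h3 : x - 1 ≤ x * Real.log x := by
    have h4 := mul_le_mul_of_nonneg_left h2 (le_of_lt hx0)
    have h5 : x * (1 - x⁻¹) = x - 1 := by field_simp
    linarith
  exact h3.trans (mul_le_mul_of_nonneg_right hθ hlog)

end Aux

/-- uniform boundedness of the rescaled nonlinearities `f_n`. -/
theorem fSeq_bounded [CompleteSpace X]
    (μ : ℕ → ℝ) (hμ : IsGrowthRate μ) (θ : ℝ) (hθ : 1 ≤ θ)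
    (hμr : ∀ n, μ (n + 1) / μ n ≤ θ)
    (A : ℕ → X ≃L[ℝ] X) (Nrm : ℕ → X → ℝ) (hNrm : IsNormFamily Nrm)
    (hEq : NormsEquivalent Nrm)
    (K a : ℝ) (hK : 0 < K) (ha : 0 < a)
    (hfwd : ∀ k m : ℕ, 1 ≤ k → k ≤ m → ∀ x : X,
      Nrm m (evolE A m k x) ≤ K * (μ m / μ k) ^ a * Nrm k x)
    (g : ℕ → X → X) (M : ℝ) (hM : 0 < M)
    (hbnd : ∀ n, 1 ≤ n → ∀ x : X, Nrm (n + 1) (g n x) ≤ M * ((μ (n + 1) - μ n) / μ n))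
    (hhom : ∀ n, 1 ≤ n → IsHomeoOf (pert A g n)) :
    ∃ C₁ : ℝ, 0 < C₁ ∧ ∀ n, 1 ≤ n → ∀ x : X,
      Nrm (floorInvTilde μ (expRate n) + 1) (fSeq A g μ n x) ≤ C₁ := by
  have hθ0 : 0 < θ := lt_of_lt_of_le one_pos hθ
  have h3θ : (1 : ℝ) < 3 * θ ^ 2 := by nlinarith
  have hlog3 : 0 < Real.log (3 * θ ^ 2) := Real.log_pos h3θ
  refine ⟨K * (3 * θ ^ 2) ^ a * M * (θ * Real.log (3 * θ ^ 2)), by positivity, ?_⟩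
  intro n hn x
  set p := floorInvTilde μ (expRate (n - 1)) with hp
  set q := floorInvTilde μ (expRate n) with hq
  have ht1 : (1 : ℝ) ≤ expRate (n - 1) := Real.one_le_exp (by positivity)
  have ht2 : (1 : ℝ) ≤ expRate n := Real.one_le_exp (by positivity)
  have hqle : μ q ≤ expRate n := floorInv_le hμ ht2
  have hpgt : expRate (n - 1) < μ (p + 1) := lt_floorInv_succ hμ ht1
  have hexp : expRate n = Real.exp 1 * expRate (n - 1) := by
    rw [expRate, expRate, ← Real.exp_add]
    congr 1
    have : ((n - 1 : ℕ) : ℝ) = (n : ℝ) - 1 := by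
      rw [Nat.cast_sub hn]; norm_num
    rw [this]; ring
  have he3 : Real.exp 1 < 3 := by
    have := Real.exp_one_lt_d9
    linarith
  -- key: μ (q+1) ≤ 3θ² μ (p+1)
  have hkey : μ (q + 1) ≤ 3 * θ ^ 2 * μ (p + 1) := by
    have h1 : μ (q + 1) ≤ θ * μ q := by
      have := hμr q
      rw [div_le_iff₀ (growth_pos hμ q)] at this
      linarith
    have h2 : μ q ≤ Real.exp 1 * expRate (n - 1) := by rw [← hexp]; exact hqle
    have hppos := growth_pos hμ (p + 1)
    have c1 : Real.exp 1 * expRate (n - 1) ≤ 3 * μ (p + 1) := by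
      have h4 : Real.exp 1 * expRate (n - 1) ≤ 3 * expRate (n - 1) :=
        mul_le_mul_of_nonneg_right he3.le (by linarith)
      linarith
    have c2 : μ (q + 1) ≤ θ * (3 * μ (p + 1)) := by
      calc μ (q + 1) ≤ θ * μ q := h1
        _ ≤ θ * (Real.exp 1 * expRate (n - 1)) := mul_le_mul_of_nonneg_left h2 hθ0.le
        _ ≤ θ * (3 * μ (p + 1)) := mul_le_mul_of_nonneg_left c1 hθ0.le
    have c3 : θ * μ (p + 1) ≤ θ ^ 2 * μ (p + 1) :=
      mul_le_mul_of_nonneg_right (by nlinarith) hppos.le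
    linarith
  have hratio : ∀ j ∈ Finset.Icc (p + 1) q, μ (q + 1) / μ (j + 1) ≤ 3 * θ ^ 2 := by
    intro j hj
    rw [Finset.mem_Icc] at hj
    have hj1 : μ (p + 1) ≤ μ (j + 1) := hμ.1.monotone (by omega)
    rw [div_le_iff₀ (growth_pos hμ (j + 1))]
    nlinarith [growth_pos hμ (p + 1)]
  -- sum bound
  have hsum : ∑ j ∈ Finset.Icc (p + 1) q, (μ (j + 1) - μ j) / μ j
      ≤ θ * Real.log (3 * θ ^ 2) := by
    have hpq : p ≤ q := floorInv_mono hμ ht1 (Real.exp_le_exp.mpr (by exact_mod_cast Nat.sub_le n 1))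
    calc ∑ j ∈ Finset.Icc (p + 1) q, (μ (j + 1) - μ j) / μ j
        ≤ ∑ j ∈ Finset.Icc (p + 1) q, θ * (Real.log (μ (j + 1)) - Real.log (μ j)) := by
          apply Finset.sum_le_sum
          intro j _
          have hjp := growth_pos hμ j
          have hj1p := growth_pos hμ (j + 1)
          have hxl : 1 ≤ μ (j + 1) / μ j :=
            (one_le_div hjp).mpr (hμ.1 (Nat.lt_succ_self j)).le
          have h1 : (μ (j + 1) - μ j) / μ j = μ (j + 1) / μ j - 1 := by
            field_simp
          have h2 : Real.log (μ (j + 1) / μ j) = Real.log (μ (j + 1)) - Real.log (μ j) :=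
            Real.log_div hj1p.ne' hjp.ne'
          rw [h1, ← h2]
          exact sub_one_le_mul_log hxl (hμr j)
      _ = θ * ∑ j ∈ Finset.Icc (p + 1) q, (Real.log (μ (j + 1)) - Real.log (μ j)) := by
          rw [Finset.mul_sum]
      _ = θ * (Real.log (μ (q + 1)) - Real.log (μ (p + 1))) := by
          congr 1
          rw [← Finset.Ico_add_one_right_eq_Icc,
            Finset.sum_Ico_eq_sub (fun j => Real.log (μ (j + 1)) - Real.log (μ j))
              (by omega : p + 1 ≤ q + 1)]
          rw [Finset.sum_range_sub (fun j => Real.log (μ j)),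
            Finset.sum_range_sub (fun j => Real.log (μ j))]
          ring
      _ ≤ θ * Real.log (3 * θ ^ 2) := by
          apply mul_le_mul_of_nonneg_left _ hθ0.le
          have hll : Real.log (μ (q + 1)) ≤ Real.log (3 * θ ^ 2 * μ (p + 1)) :=
            Real.log_le_log (growth_pos hμ (q + 1)) hkey
          rw [Real.log_mul (by positivity) (growth_pos hμ (p + 1)).ne'] at hll
          linarith
  -- main estimate
  calc Nrm (q + 1) (fSeq A g μ n x)
      ≤ ∑ j ∈ Finset.Icc (p + 1) q,
          Nrm (q + 1) (evolE A (q + 1) (j + 1) (g j (nlEvol A g j (p + 1) x))) := by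
        rw [fSeq]
        exact nrm_sum_le hNrm _ _ _
    _ ≤ ∑ j ∈ Finset.Icc (p + 1) q,
          K * (3 * θ ^ 2) ^ a * M * ((μ (j + 1) - μ j) / μ j) := by
        apply Finset.sum_le_sum
        intro j hj
        have hjm := hj
        rw [Finset.mem_Icc] at hjm
        have h1 := hfwd (j + 1) (q + 1) (by omega) (by omega) (g j (nlEvol A g j (p + 1) x))
        have h2 := hbnd j (by omega) (nlEvol A g j (p + 1) x)
        have hr3 : (μ (q + 1) / μ (j + 1)) ^ a ≤ (3 * θ ^ 2) ^ a :=
          Real.rpow_le_rpow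
            (div_nonneg (growth_pos hμ (q + 1)).le (growth_pos hμ (j + 1)).le)
            (hratio j hj) ha.le
        have hs0 : 0 ≤ (μ (j + 1) - μ j) / μ j :=
          div_nonneg (by linarith [hμ.1 (Nat.lt_succ_self j)]) (growth_pos hμ j).le
        have hr0 : 0 ≤ K * (μ (q + 1) / μ (j + 1)) ^ a :=
          mul_nonneg hK.le (Real.rpow_nonneg
            (div_nonneg (growth_pos hμ (q + 1)).le (growth_pos hμ (j + 1)).le) a)
        have step1 := mul_le_mul_of_nonneg_left h2 hr0
        have step2 : K * (μ (q + 1) / μ (j + 1)) ^ a * (M * ((μ (j + 1) - μ j) / μ j))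
            ≤ K * (3 * θ ^ 2) ^ a * (M * ((μ (j + 1) - μ j) / μ j)) := by
          apply mul_le_mul_of_nonneg_right _ (mul_nonneg hM.le hs0)
          exact mul_le_mul_of_nonneg_left hr3 hK.le
        calc Nrm (q + 1) (evolE A (q + 1) (j + 1) (g j (nlEvol A g j (p + 1) x)))
            ≤ K * (μ (q + 1) / μ (j + 1)) ^ a * Nrm (j + 1) (g j (nlEvol A g j (p + 1) x)) := h1
          _ ≤ K * (μ (q + 1) / μ (j + 1)) ^ a * (M * ((μ (j + 1) - μ j) / μ j)) := step1
          _ ≤ K * (3 * θ ^ 2) ^ a * (M * ((μ (j + 1) - μ j) / μ j)) := step2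
          _ = K * (3 * θ ^ 2) ^ a * M * ((μ (j + 1) - μ j) / μ j) := by ring
    _ = K * (3 * θ ^ 2) ^ a * M * ∑ j ∈ Finset.Icc (p + 1) q, (μ (j + 1) - μ j) / μ j := by
        rw [Finset.mul_sum]
    _ ≤ K * (3 * θ ^ 2) ^ a * M * (θ * Real.log (3 * θ ^ 2)) := by
        apply mul_le_mul_of_nonneg_left hsum (by positivity)

end
end

section
/- Suppose the system x_{n+1}=A_n x_n on a Banach space X admits a strong nonuniform μ-dichotomy with projections {P_k} and constants N ≥ 1, ν̃ ≥ ν > 0, ε ≥ 0. Define for n ≥ 1 and x ∈ X the Lyapunov norms ‖x‖_n := ‖x‖_n^s + ‖x‖_n^u, where ‖x‖_n^s := sup_{m≥n}(‖Φ_A(m,n)P_n x‖ (μ_m/μ_n)^ν) + sup_{m<n}(‖Φ_A(m,n)P_n x‖ (μ_n/μ_m)^{−ν̃}) and ‖x‖_n^u := sup_{m≤n}(‖Φ_A(m,n)(Id−P_n)x‖ (μ_n/μ_m)^ν) + sup_{m>n}(‖Φ_A(m,n)(Id−P_n)x‖ (μ_m/μ_n)^{−ν̃}). Then ‖x‖ ≤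 ‖x‖_n ≤ 4N μ_n^ε ‖x‖ for all x ∈ X and n ≥ 1. -/
noncomputable section

open Filter Metric Set Topology

variable {X : Type*} [NormedAddCommGroup X] [NormedSpace ℝ X]

/-- The Lyapunov norms associated to a strong nonuniform μ-dichotomy. -/
def lyapNorm (μ : ℕ → ℝ) (A : ℕ → X ≃L[ℝ] X) (P : ℕ → X →L[ℝ] X) (ν ν' : ℝ)
    (n : ℕ) (x : X) : ℝ :=
  (sSup ((fun m => ‖evolE A m n (P n x)‖ * (μ m / μ n) ^ ν) '' {m : ℕ | n ≤ m}) +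
      sSup ((fun m => ‖evolE A m n (P n x)‖ * (μ n / μ m) ^ (-ν')) '' {m : ℕ | 1 ≤ m ∧ m < n})) +
    (sSup ((fun m => ‖evolE A m n (x - P n x)‖ * (μ n / μ m) ^ ν) '' {m : ℕ | 1 ≤ m ∧ m ≤ n}) +
      sSup ((fun m => ‖evolE A m n (x - P n x)‖ * (μ m / μ n) ^ (-ν')) '' {m : ℕ | n < m}))

/-- the Lyapunov norms are equivalent to the original norm,
`‖x‖ ≤ ‖x‖_n ≤ 4N μ_n^ε ‖x‖`. -/
theorem lyapNorm_equiv [CompleteSpace X]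
    (μ : ℕ → ℝ) (hμ : IsGrowthRate μ)
    (A : ℕ → X ≃L[ℝ] X) (P : ℕ → X →L[ℝ] X)
    (N ν ν' ε : ℝ) (hN : 1 ≤ N) (hν : 0 < ν) (hνν : ν ≤ ν') (hε : 0 ≤ ε)
    (hPP : ∀ k, 1 ≤ k → (P k).comp (P k) = P k)
    (hAP : ∀ k, 1 ≤ k →
      ((A k : X →L[ℝ] X)).comp (P k) = (P (k + 1)).comp ((A k : X →L[ℝ] X)))
    (h1 : ∀ k m : ℕ, 1 ≤ k → k ≤ m →
      ‖(evolE A m k).comp (P k)‖ ≤ N * (μ m / μ k) ^ (-ν) * μ k ^ ε)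
    (h2 : ∀ k m : ℕ, 1 ≤ k → k ≤ m →
      ‖(evolE A m k).comp (1 - P k)‖ ≤ N * (μ m / μ k) ^ ν' * μ k ^ ε)
    (h3 : ∀ m k : ℕ, 1 ≤ m → m ≤ k →
      ‖(evolE A m k).comp (1 - P k)‖ ≤ N * (μ k / μ m) ^ (-ν) * μ k ^ ε)
    (h4 : ∀ m k : ℕ, 1 ≤ m → m ≤ k →
      ‖(evolE A m k).comp (P k)‖ ≤ N * (μ k / μ m) ^ ν' * μ k ^ ε) :
    ∀ n, 1 ≤ n → ∀ x : X,
      ‖x‖ ≤ lyapNorm μ A P ν ν' n x ∧ lyapNorm μ A P ν ν' n x ≤ 4 * N * μ n ^ ε * ‖x‖ := by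
  intro n hn x
  have hμpos : ∀ k, (0:ℝ) < μ k := by
    intro k
    have h1' : μ 0 ≤ μ k := hμ.1.monotone (Nat.zero_le k)
    rw [hμ.2.1] at h1'
    linarith
  have hεpos : (0:ℝ) ≤ μ n ^ ε := Real.rpow_nonneg (hμpos n).le ε
  set c : ℝ := N * μ n ^ ε * ‖x‖ with hc
  have hc0 : 0 ≤ c :=
    mul_nonneg (mul_nonneg (by linarith) hεpos) (norm_nonneg x)
  have key : ∀ (a r p : ℝ), 0 < r → a ≤ N * r ^ (-p) * μ n ^ ε * ‖x‖ → a * r ^ p ≤ c := by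
    intro a r p hr h
    have hcan : r ^ (-p) * r ^ p = 1 := by
      rw [← Real.rpow_add hr]; simp
    have hrp : (0:ℝ) ≤ r ^ p := (Real.rpow_pos_of_pos hr p).le
    calc a * r ^ p ≤ (N * r ^ (-p) * μ n ^ ε * ‖x‖) * r ^ p :=
          mul_le_mul_of_nonneg_right h hrp
      _ = N * μ n ^ ε * ‖x‖ * (r ^ (-p) * r ^ p) := by ring
      _ = c := by rw [hcan, mul_one]
  -- bound on the four suprema
  have hbound1 : ∀ y ∈ (fun m => ‖evolE A m n (P n x)‖ * (μ m / μ n) ^ ν) ''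
      {m : ℕ | n ≤ m}, y ≤ c := by
    rintro y ⟨m, hm, rfl⟩
    have hr : 0 < μ m / μ n := div_pos (hμpos m) (hμpos n)
    refine key _ _ ν hr ?_
    calc ‖evolE A m n (P n x)‖ = ‖((evolE A m n).comp (P n)) x‖ := rfl
      _ ≤ ‖(evolE A m n).comp (P n)‖ * ‖x‖ := ContinuousLinearMap.le_opNorm _ x
      _ ≤ (N * (μ m / μ n) ^ (-ν) * μ n ^ ε) * ‖x‖ :=
          mul_le_mul_of_nonneg_right (h1 n m hn hm) (norm_nonneg x)
      _ = N * (μ m / μ n) ^ (-ν) * μ n ^ ε * ‖x‖ := by ring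
  have hbound2 : ∀ y ∈ (fun m => ‖evolE A m n (P n x)‖ * (μ n / μ m) ^ (-ν')) ''
      {m : ℕ | 1 ≤ m ∧ m < n}, y ≤ c := by
    rintro y ⟨m, hm, rfl⟩
    have hr : 0 < μ n / μ m := div_pos (hμpos n) (hμpos m)
    refine key _ _ (-ν') hr ?_
    calc ‖evolE A m n (P n x)‖ = ‖((evolE A m n).comp (P n)) x‖ := rfl
      _ ≤ ‖(evolE A m n).comp (P n)‖ * ‖x‖ := ContinuousLinearMap.le_opNorm _ x
      _ ≤ (N * (μ n / μ m) ^ ν' * μ n ^ ε) * ‖x‖ :=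
          mul_le_mul_of_nonneg_right (h4 m n hm.1 hm.2.le) (norm_nonneg x)
      _ = N * (μ n / μ m) ^ (-(-ν')) * μ n ^ ε * ‖x‖ := by rw [neg_neg]
  have happ : ∀ m : ℕ, evolE A m n (x - P n x) = ((evolE A m n).comp (1 - P n)) x := by
    intro m
    simp [ContinuousLinearMap.comp_apply, ContinuousLinearMap.sub_apply]
  have hbound3 : ∀ y ∈ (fun m => ‖evolE A m n (x - P n x)‖ * (μ n / μ m) ^ ν) ''
      {m : ℕ | 1 ≤ m ∧ m ≤ n}, y ≤ c := by
    rintro y ⟨m, hm, rfl⟩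
    have hr : 0 < μ n / μ m := div_pos (hμpos n) (hμpos m)
    refine key _ _ ν hr ?_
    calc ‖evolE A m n (x - P n x)‖ = ‖((evolE A m n).comp (1 - P n)) x‖ := by rw [happ]
      _ ≤ ‖(evolE A m n).comp (1 - P n)‖ * ‖x‖ := ContinuousLinearMap.le_opNorm _ x
      _ ≤ (N * (μ n / μ m) ^ (-ν) * μ n ^ ε) * ‖x‖ :=
          mul_le_mul_of_nonneg_right (h3 m n hm.1 hm.2) (norm_nonneg x)
      _ = N * (μ n / μ m) ^ (-ν) * μ n ^ ε * ‖x‖ := by ring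
  have hbound4 : ∀ y ∈ (fun m => ‖evolE A m n (x - P n x)‖ * (μ m / μ n) ^ (-ν')) ''
      {m : ℕ | n < m}, y ≤ c := by
    rintro y ⟨m, hm, rfl⟩
    have hr : 0 < μ m / μ n := div_pos (hμpos m) (hμpos n)
    refine key _ _ (-ν') hr ?_
    calc ‖evolE A m n (x - P n x)‖ = ‖((evolE A m n).comp (1 - P n)) x‖ := by rw [happ]
      _ ≤ ‖(evolE A m n).comp (1 - P n)‖ * ‖x‖ := ContinuousLinearMap.le_opNorm _ x
      _ ≤ (N * (μ m / μ n) ^ ν' * μ n ^ ε) * ‖x‖ :=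
          mul_le_mul_of_nonneg_right (h2 n m hn hm.le) (norm_nonneg x)
      _ = N * (μ m / μ n) ^ (-(-ν')) * μ n ^ ε * ‖x‖ := by rw [neg_neg]
  have hid : ∀ y : X, evolE A n n y = y := by
    intro y
    simp [evolE, evolEquiv, evolFwdE]
  -- lower bounds for the first and third suprema
  have hμnn : (μ n / μ n : ℝ) = 1 := div_self (hμpos n).ne'
  have hs1 : ‖P n x‖ ≤ sSup ((fun m => ‖evolE A m n (P n x)‖ * (μ m / μ n) ^ ν) ''
      {m : ℕ | n ≤ m}) := by
    have heq : ‖P n x‖ = ‖evolE A n n (P n x)‖ * (μ n / μ n) ^ ν := by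
      rw [hid, hμnn, Real.one_rpow, mul_one]
    rw [heq]
    exact le_csSup ⟨c, hbound1⟩ ⟨n, by simp, rfl⟩
  have hs3 : ‖x - P n x‖ ≤ sSup ((fun m => ‖evolE A m n (x - P n x)‖ * (μ n / μ m) ^ ν) ''
      {m : ℕ | 1 ≤ m ∧ m ≤ n}) := by
    have heq : ‖x - P n x‖ = ‖evolE A n n (x - P n x)‖ * (μ n / μ n) ^ ν := by
      rw [hid, hμnn, Real.one_rpow, mul_one]
    rw [heq]
    exact le_csSup ⟨c, hbound3⟩ ⟨n, by simp [hn], rfl⟩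
  have hs2 : 0 ≤ sSup ((fun m => ‖evolE A m n (P n x)‖ * (μ n / μ m) ^ (-ν')) ''
      {m : ℕ | 1 ≤ m ∧ m < n}) := by
    refine Real.sSup_nonneg ?_
    rintro y ⟨m, _, rfl⟩
    exact mul_nonneg (norm_nonneg _)
      (Real.rpow_nonneg (div_nonneg (hμpos n).le (hμpos m).le) _)
  have hs4 : 0 ≤ sSup ((fun m => ‖evolE A m n (x - P n x)‖ * (μ m / μ n) ^ (-ν')) ''
      {m : ℕ | n < m}) := by
    refine Real.sSup_nonneg ?_
    rintro y ⟨m, _, rfl⟩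
    exact mul_nonneg (norm_nonneg _)
      (Real.rpow_nonneg (div_nonneg (hμpos m).le (hμpos n).le) _)
  constructor
  · have hxle : ‖x‖ ≤ ‖P n x‖ + ‖x - P n x‖ := by
      have hdec : x = P n x + (x - P n x) := by abel
      calc ‖x‖ = ‖P n x + (x - P n x)‖ := by rw [← hdec]
        _ ≤ ‖P n x‖ + ‖x - P n x‖ := norm_add_le _ _
    unfold lyapNorm
    linarith
  · have t1 := Real.sSup_le hbound1 hc0
    have t2 := Real.sSup_le hbound2 hc0
    have t3 := Real.sSup_le hbound3 hc0
    have t4 := Real.sSup_le hbound4 hc0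
    have h4c : (4:ℝ) * N * μ n ^ ε * ‖x‖ = 4 * c := by rw [hc]; ring
    unfold lyapNorm
    rw [h4c]
    linarith

end
end
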